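/- arXiv:2504.07973 — 9 statements merged into one kernel-verified Lean document; each statement's English description precedes it below -/
import Mathlib

section
/- Let K be a field of characteristic ≠ 2 and let (a₀,b₀) be a nontrivial node. Then (a₀,b₀) is 2-times advanceable if and only if ((a₀+b₀)/2)²·a₀b₀ is a fourth power in K. Moreover, if additionally −1 is a square in K and ((a₀+b₀)/2)²·a₀b₀ is a fourth power, then every nontrivial node (a₁,b₁) with (a₀,b₀) ↦ (a₁,b₁) is itself 1-times advanceable (i.e., both children of (a₀,b₀) can be advanced at least once). -/
namespace AGM

variable {K : Type*} [Field K]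

/-- A node `(a,b)` is nontrivial if `a`, `b`, `a+b`, `a-b` are all nonzero. -/
def Nontriv (p : K × K) : Prop :=
  p.1 ≠ 0 ∧ p.2 ≠ 0 ∧ p.1 + p.2 ≠ 0 ∧ p.1 - p.2 ≠ 0

/-- AGM advancement between nontrivial nodes: `2c = a + b` and `d² = ab`. -/
def Adv (p q : K × K) : Prop :=
  Nontriv p ∧ Nontriv q ∧ 2 * q.1 = p.1 + p.2 ∧ q.2 ^ 2 = p.1 * p.2

/-- `AdvN n p`: there is a chain of `n` successive AGM advancements through
nontrivial nodes starting at `p`. -/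
def AdvN : ℕ → K × K → Prop
  | 0, p => Nontriv p
  | n + 1, p => ∃ q, Adv p q ∧ AdvN n q

/-- `BackN n p`: there is a chain of `n` successive AGM advancements through
nontrivial nodes ending at `p`. -/
def BackN : ℕ → K × K → Prop
  | 0, p => Nontriv p
  | n + 1, p => ∃ q, Adv q p ∧ BackN n q

/-- Indefinitely advanceable nodes. -/
def AdvInf (p : K × K) : Prop := ∀ n, AdvN n p

/-- Indefinitely backtrackable nodes. -/
def BackInf (p : K × K) : Prop := ∀ n, BackN n p

/-- Nontrivial k-values: `k ∉ {0, 1, -1}`. -/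
def Tk (k : K) : Prop := k ≠ 0 ∧ k ≠ 1 ∧ k ≠ -1

/-- k-advancement: `(1+k₁)² k₂² = 4 k₁` for nontrivial k-values. -/
def kAdv (k₁ k₂ : K) : Prop := Tk k₁ ∧ Tk k₂ ∧ (1 + k₁) ^ 2 * k₂ ^ 2 = 4 * k₁

/-- `TAdvN n k`: a chain of `n` k-advancements within `T_K` starting at `k`. -/
def TAdvN : ℕ → K → Prop
  | 0, k => Tk k
  | n + 1, k => ∃ k₂, kAdv k k₂ ∧ TAdvN n k₂

/-- `TBackN n k`: a chain of `n` k-advancements within `T_K` ending at `k`. -/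
def TBackN : ℕ → K → Prop
  | 0, k => Tk k
  | n + 1, k => ∃ k₁, kAdv k₁ k ∧ TBackN n k₁

/-- Indefinitely advanceable k-values. -/
def TAdvInf (k : K) : Prop := ∀ n, TAdvN n k

/-- Indefinitely backtrackable k-values. -/
def TBackInf (k : K) : Prop := ∀ n, TBackN n k

end AGM

/-!
A node `(a, b)` with `2c = a + b` and `d² = ab` is automatically nontrivial once `(a, b)` is,
since `4(c² - d²) = (a - b)²`. Hence a nontrivial node advances exactly when `ab` is a square.
Advancing twice from `(a₀, b₀)` goes through `(c, b₁)` with `c = (a₀ + b₀)/2`, `b₁² = a₀b₀`, and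
needs `c b₁` to be a square; since `(c b₁)² = c² a₀b₀`, a square root `b₂` of `c b₁` gives the
fourth root of `c² a₀b₀`, and conversely a fourth root `t` gives `b₁ = t²/c`. For an arbitrary
child `(c, b₁)` one only knows `c b₁ = ±t²`, which is a square when `-1` is.
-/

theorem IsSquare.of_sq_eq_pow_four {K : Type*} [Field K] (hi : IsSquare (-1 : K)) {x t : K}
    (h : x ^ 2 = t ^ 4) : IsSquare x := by
  obtain ⟨i, hi⟩ := hi
  rcases sq_eq_sq_iff_eq_or_eq_neg.mp (h.trans (by ring) : x ^ 2 = (t ^ 2) ^ 2) with hx | hx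
  · exact ⟨t, by rw [hx]; ring⟩
  · exact ⟨i * t, by rw [hx, ← neg_one_mul, hi]; ring⟩

namespace AGM

variable {K : Type*} [Field K]

theorem nontriv_of_step {a b c d : K} (hp : Nontriv (a, b)) (hc : 2 * c = a + b)
    (hd : d ^ 2 = a * b) : Nontriv (c, d) := by
  obtain ⟨ha, hb, hs, hdiff⟩ := hp
  have hcd : 4 * ((c + d) * (c - d)) = (a - b) ^ 2 := by
    linear_combination (2 * c + a + b) * hc - 4 * hd
  have hcd0 : (c + d) * (c - d) ≠ 0 := by
    rintro h
    exact pow_ne_zero 2 hdiff (by rw [← hcd, h, mul_zero])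
  refine ⟨?_, ?_, left_ne_zero_of_mul hcd0, right_ne_zero_of_mul hcd0⟩
  · rintro rfl
    exact hs (by rw [← hc, mul_zero])
  · rintro rfl
    exact mul_ne_zero ha hb (by rw [← hd]; ring)

theorem adv_of_step {a b c d : K} (hp : Nontriv (a, b)) (hc : 2 * c = a + b)
    (hd : d ^ 2 = a * b) : Adv (a, b) (c, d) :=
  ⟨hp, nontriv_of_step hp hc hd, hc, hd⟩

theorem Adv.fst_eq (h2 : (2 : K) ≠ 0) {a b c d : K} (h : Adv (a, b) (c, d)) :
    c = (a + b) / 2 := by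
  rw [eq_div_iff h2, mul_comm]
  exact h.2.2.1

theorem Adv.nontriv_right {p q : K × K} (h : Adv p q) : Nontriv q :=
  h.2.1

theorem Adv.snd_sq {a b c d : K} (h : Adv (a, b) (c, d)) : d ^ 2 = a * b :=
  h.2.2.2

theorem advN_one_iff_isSquare (h2 : (2 : K) ≠ 0) {a b : K} (hp : Nontriv (a, b)) :
    AdvN 1 (a, b) ↔ IsSquare (a * b) := by
  constructor
  · rintro ⟨⟨c, d⟩, ⟨-, -, -, hd⟩, -⟩
    exact ⟨d, by rw [← hd, sq]⟩
  · rintro ⟨d, hd⟩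
    have hc : 2 * ((a + b) / 2) = a + b := mul_div_cancel₀ _ h2
    have hd' : d ^ 2 = a * b := by rw [hd, sq]
    exact ⟨_, adv_of_step hp hc hd', nontriv_of_step hp hc hd'⟩

theorem advN_two_iff (h2 : (2 : K) ≠ 0) {a b : K} (hp : Nontriv (a, b)) :
    AdvN 2 (a, b) ↔ ∃ t : K, ((a + b) / 2) ^ 2 * (a * b) = t ^ 4 := by
  constructor
  · rintro ⟨⟨c, d⟩, hadv, hq⟩
    obtain ⟨t, ht⟩ := (advN_one_iff_isSquare h2 hadv.nontriv_right).mp hq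
    refine ⟨t, ?_⟩
    rw [← hadv.fst_eq h2, ← hadv.snd_sq]
    linear_combination (c * d + t * t) * ht
  · rintro ⟨t, ht⟩
    set c := (a + b) / 2
    have hc : 2 * c = a + b := mul_div_cancel₀ _ h2
    have hc0 : c ≠ 0 := div_ne_zero hp.2.2.1 h2
    have hd : (t ^ 2 / c) ^ 2 = a * b := by
      rw [div_pow, div_eq_iff (pow_ne_zero 2 hc0)]
      linear_combination -ht
    have hadv := adv_of_step hp hc hd
    refine ⟨_, hadv, (advN_one_iff_isSquare h2 hadv.nontriv_right).mpr ⟨t, ?_⟩⟩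
    rw [mul_div_cancel₀ _ hc0, sq]

end AGM

theorem stmt1 {K : Type*} [Field K] (hchar : (2 : K) ≠ 0)
    (a₀ b₀ : K) (hnt : AGM.Nontriv (a₀, b₀)) :
    (AGM.AdvN 2 (a₀, b₀) ↔ ∃ t : K, ((a₀ + b₀) / 2) ^ 2 * (a₀ * b₀) = t ^ 4) ∧
    (IsSquare (-1 : K) → (∃ t : K, ((a₀ + b₀) / 2) ^ 2 * (a₀ * b₀) = t ^ 4) →
      ∀ a₁ b₁ : K, AGM.Adv (a₀, b₀) (a₁, b₁) → AGM.AdvN 1 (a₁, b₁)) := by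
  refine ⟨AGM.advN_two_iff hchar hnt, ?_⟩
  rintro hi ⟨t, ht⟩ a₁ b₁ hadv
  rw [AGM.advN_one_iff_isSquare hchar hadv.nontriv_right]
  refine IsSquare.of_sq_eq_pow_four hi (t := t) ?_
  rw [← ht, ← hadv.fst_eq hchar, ← hadv.snd_sq]
  ring
end

section
/- Let F be a finite field with q elements where q ≡ 5 (mod 8). If (a,b) ∈ S_F^{adv_∞} and (a,b) ↦ (c,d) and (a,b) ↦ (c',d') with (c,d) ∈ S_F^{adv_∞} and (c',d') ∈ S_F^{adv_∞}, then (c,d) = (c',d'); that is, each indefinitely advanceable node has exactly one child that is indefinitely advanceable, so AGM advancement restricted to S_F^{adv_∞} is a single-valued function. -/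
section Aux

variable {F : Type*} [Field F] [Fintype F]

lemma aux_not_isSquare_of_sq_eq_neg_one {q : ℕ}
    (hq : Fintype.card F = q) (h5 : q % 8 = 5) {u : F} (hu : u ^ 2 = -1) :
    ¬ IsSquare u := by
  have h2 : ¬ IsSquare (2 : F) := by
    rw [FiniteField.isSquare_two_iff, hq]
    omega
  have h2ne : (2 : F) ≠ 0 := fun h => h2 (h ▸ IsSquare.zero)
  rintro ⟨s, rfl⟩
  have hs : s ≠ 0 := by
    rintro rfl
    exact one_ne_zero (α := F) (by linear_combination hu)
  have h4 : s ^ 4 = -1 := by linear_combination hu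
  have h8 : s ^ 8 = 1 := by linear_combination (s ^ 4 - 1) * h4
  have hne : s ^ 4 ≠ 1 := by
    rw [h4]; intro h; exact h2ne (by linear_combination -h)
  have hd8 : orderOf s ∣ 8 := orderOf_dvd_of_pow_eq_one h8
  have hd4 : ¬ orderOf s ∣ 4 := fun h => hne (orderOf_dvd_iff_pow_eq_one.mp h)
  have hle : orderOf s ≤ 8 := Nat.le_of_dvd (by norm_num) hd8
  have ho : orderOf s = 8 := by
    interval_cases h : orderOf s <;> omega
  have hdvd : 8 ∣ q - 1 := by
    rw [← ho]
    exact orderOf_dvd_of_pow_eq_one (hq ▸ FiniteField.pow_card_sub_one_eq_one s hs)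
  omega

end Aux

theorem stmt4 {F : Type*} [Field F] [Fintype F] (q : ℕ)
    (hq : Fintype.card F = q) (h5 : q % 8 = 5)
    (a b c d c' d' : F)
    (hab : AGM.AdvInf (a, b))
    (h1 : AGM.Adv (a, b) (c, d)) (h2 : AGM.Adv (a, b) (c', d'))
    (hcd : AGM.AdvInf (c, d)) (hcd' : AGM.AdvInf (c', d')) :
    (c, d) = (c', d') := by
  classical
  have h2sq : ¬ IsSquare (2 : F) := by
    rw [FiniteField.isSquare_two_iff, hq]; omega
  have h2ne : (2 : F) ≠ 0 := fun h => h2sq (h ▸ IsSquare.zero)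
  obtain ⟨⟨ha0, hb0, hab0, hab0'⟩, ⟨hc0, hd0, hcd0, hcd0'⟩, hc1, hd1⟩ := h1
  obtain ⟨-, ⟨hc0', hd0', hcd0x, hcd0x'⟩, hc2, hd2⟩ := h2
  simp only at hc1 hd1 hc2 hd2
  have hcc : c' = c := by
    have : 2 * c' = 2 * c := by rw [hc1, hc2]
    exact mul_left_cancel₀ h2ne this
  rw [hcc] at hc0' hd0' hcd0x hcd0x' hc2 hcd' ⊢
  have hdd : d' = d ∨ d' = -d := by
    have h0 : (d' - d) * (d' + d) = 0 := by linear_combination hd2 - hd1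
    rcases mul_eq_zero.mp h0 with h | h
    · left; linear_combination h
    · right; linear_combination h
  rcases hdd with h | h
  · rw [h]
  subst h
  exfalso
  obtain ⟨⟨e, f⟩, ⟨-, ⟨he0, hf0, -, -⟩, hee, hff⟩, ⟨g, h⟩, ⟨-, ⟨-, hh0, -, -⟩, -, hhh⟩, -⟩ := hcd 2
  obtain ⟨⟨e', f'⟩, ⟨-, ⟨he0', hf0', -, -⟩, hee', hff'⟩, ⟨g', h'⟩, ⟨-, ⟨-, hh0', -, -⟩, -, hhh'⟩, -⟩ := hcd' 2
  simp only at hee hff hhh hee' hff' hhh'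
  set χ := quadraticChar F with hχ
  have key : ∀ cd ee ff hh : F, ff ≠ 0 → hh ≠ 0 → 2 * ee = cd → hh ^ 2 = ee * ff →
      χ cd * χ ff = -1 := by
    intro cd ee ff hh hffne hhhne heq hsq
    have h1 : χ (cd * ff) = χ 2 * χ (hh ^ 2) := by
      rw [← map_mul, ← heq, hsq]; ring_nf
    rw [quadraticChar_sq_one' hhhne, map_mul,
      quadraticChar_neg_one_iff_not_isSquare.mpr h2sq] at h1
    linarith [h1]
  have k1 : χ (c + d) * χ f = -1 := key (c + d) e f h hf0 hh0 hee hhh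
  have k2 : χ (c - d) * χ f' = -1 := by
    have := key (c + -d) e' f' h' hf0' hh0' hee' hhh'
    rw [← sub_eq_add_neg] at this
    exact this
  have hu : (f' / f) ^ 2 = -1 := by
    field_simp
    linear_combination hff' + hff
  have hun : ¬ IsSquare (f' / f) := aux_not_isSquare_of_sq_eq_neg_one hq h5 hu
  have huz : f' / f ≠ 0 := by
    intro h0
    rw [h0] at hu
    exact one_ne_zero (α := F) (by linear_combination hu)
  have hχu : χ (f' / f) = -1 := quadraticChar_neg_one_iff_not_isSquare.mpr hun
  have hf'eq : f' = (f' / f) * f := by field_simp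
  have k2' : χ (c - d) * (χ (f' / f) * χ f) = -1 := by
    rw [← map_mul, ← hf'eq]; exact k2
  rw [hχu] at k2'
  have hab2 : ((a - b) / 2) ^ 2 = (c + d) * (c - d) := by
    field_simp
    linear_combination (-(2 * c + a + b)) * hc1 + 4 * hd1
  have habne : (a - b) / 2 ≠ 0 :=
    div_ne_zero (sub_ne_zero.mpr (fun hx => hab0' (by rw [hx]; ring))) h2ne
  have k3 : χ (c + d) * χ (c - d) = 1 := by
    rw [← map_mul, ← hab2]
    exact quadraticChar_sq_one' habne
  have hfz : χ f = 1 ∨ χ f = -1 := quadraticChar_dichotomy hf0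
  rcases hfz with hz | hz <;> rw [hz] at k1 k2' <;> nlinarith [k1, k2', k3]
end

section
/- Let F be a finite field with q elements where q ≡ 5 (mod 8). Then T_F^{adv_∞} = { k ∈ F : k ≠ 0, k ≠ 1, k ≠ −1, and 4k(1+k)² is a fourth power in F }. -/
private lemma stmt7_sqFourth {F : Type*} [Field F] [Fintype F] (q : ℕ)
    (hq : Fintype.card F = q) (h5 : q % 8 = 5) (s : F) :
    ∃ t : F, s ^ 2 = t ^ 4 ∨ s ^ 2 = -t ^ 4 := by
  classical
  rcases eq_or_ne s 0 with rfl | hs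
  · exact ⟨0, Or.inl (by ring)⟩
  obtain ⟨g, hg⟩ := IsCyclic.exists_generator (α := Fˣ)
  obtain ⟨a, ha⟩ := mem_powers_iff_mem_zpowers.mpr (hg (Units.mk0 s hs))
  set m : ℕ := (q - 1) / 4 with hm
  have hcard : Fintype.card Fˣ = q - 1 := by rw [Fintype.card_units, hq]
  have horder : orderOf g = 4 * m := by
    rw [orderOf_eq_card_of_forall_mem_zpowers hg, Nat.card_eq_fintype_card, hcard]; omega
  have hmodd : m % 2 = 1 := by omega
  have h4m : g ^ (4 * m) = 1 := by rw [← horder]; exact pow_orderOf_eq_one g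
  have hneg : g ^ (2 * m) = (-1 : Fˣ) := by
    have hsq : ((g ^ (2 * m) : Fˣ) : F) * ((g ^ (2 * m) : Fˣ) : F) = 1 := by
      rw [← Units.val_mul, ← pow_add]
      have : 2 * m + 2 * m = 4 * m := by ring
      rw [this, h4m, Units.val_one]
    have hne : g ^ (2 * m) ≠ 1 := by
      intro h
      have := orderOf_dvd_of_pow_eq_one h
      rw [horder] at this
      have := Nat.le_of_dvd (by omega) this
      omega
    rcases mul_self_eq_one_iff.mp hsq with h | h
    · exact absurd (Units.ext h) hne
    · exact Units.ext h
  rcases Nat.even_or_odd a with ⟨b, hb⟩ | ⟨b, hb⟩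
  · refine ⟨((g ^ b : Fˣ) : F), Or.inl ?_⟩
    have key : (Units.mk0 s hs) ^ 2 = (g ^ b) ^ 4 := by
      rw [← ha, ← pow_mul, ← pow_mul]
      congr 1; omega
    have := congrArg Units.val key
    simpa using this
  · obtain ⟨c, hc⟩ : ∃ c, m + a = 2 * c := ⟨(m + a) / 2, by omega⟩
    refine ⟨((g ^ c : Fˣ) : F), Or.inr ?_⟩
    have key : (Units.mk0 s hs) ^ 2 = -(g ^ c) ^ 4 := by
      have h1 : g ^ (2 * m) * (g ^ c) ^ 4 = (g ^ a) ^ 2 := by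
        rw [← pow_mul, ← pow_mul, ← pow_add]
        have he : 2 * m + c * 4 = a * 2 + 4 * m := by omega
        rw [he, pow_add, h4m, mul_one]
      rw [← ha, ← h1, hneg, neg_one_mul]
    have := congrArg Units.val key
    simpa using this

theorem stmt7 {F : Type*} [Field F] [Fintype F] (q : ℕ)
    (hq : Fintype.card F = q) (h5 : q % 8 = 5) :
    {k : F | AGM.TAdvInf k} =
      {k : F | k ≠ 0 ∧ k ≠ 1 ∧ k ≠ -1 ∧
        ∃ t : F, 4 * k * (1 + k) ^ 2 = t ^ 4} := by

  have h2 : (2 : F) ≠ 0 := by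
    intro h2
    have hchar : ringChar F = 2 := by
      have hdvd : ringChar F ∣ 2 := ringChar.dvd (by exact_mod_cast h2)
      have hp : (ringChar F).Prime := CharP.char_is_prime F (ringChar F)
      exact (Nat.prime_dvd_prime_iff_eq hp Nat.prime_two).mp hdvd
    have := FiniteField.even_card_of_char_two hchar
    rw [hq] at this
    omega
  have h4 : (4 : F) ≠ 0 := by
    intro h; apply h2
    have : (4 : F) = 2 * 2 := by norm_num
    rcases mul_eq_zero.mp (this ▸ h) with h' | h' <;> exact h'
  have hL : ∀ s : F, ∃ t : F, s ^ 2 = t ^ 4 ∨ s ^ 2 = -t ^ 4 := stmt7_sqFourth q hq h5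
  have step : ∀ k : F, (AGM.Tk k ∧ ∃ t : F, 4 * k * (1 + k) ^ 2 = t ^ 4) →
      ∃ k₂, AGM.kAdv k k₂ ∧ (AGM.Tk k₂ ∧ ∃ t : F, 4 * k₂ * (1 + k₂) ^ 2 = t ^ 4) := by
    rintro k ⟨⟨hk0, hk1, hkm1⟩, t, ht⟩
    have h1k : (1 : F) + k ≠ 0 := by
      intro h; exact hkm1 (by linear_combination h)
    have ht0 : t ≠ 0 := by
      intro h
      rw [h] at ht
      have : (4 : F) * k * (1 + k) ^ 2 = 0 := by rw [ht]; ring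
      rcases mul_eq_zero.mp this with h' | h'
      · rcases mul_eq_zero.mp h' with h'' | h''
        · exact h4 h''
        · exact hk0 h''
      · exact h1k (pow_eq_zero_iff (n := 2) (by norm_num) |>.mp h')
    obtain ⟨s, hs, ht2⟩ : ∃ s : F, s ^ 2 = k ∧ t ^ 2 = 2 * s * (1 + k) := by
      refine ⟨t ^ 2 / (2 * (1 + k)), ?_, ?_⟩
      · field_simp
        linear_combination -ht
      · field_simp
    have hs0 : s ≠ 0 := by
      intro h; exact hk0 (by rw [← hs, h]; ring)
    have hsne1 : s ≠ 1 := by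
      intro h; exact hk1 (by rw [← hs, h]; ring)
    have hsnem1 : s ≠ -1 := by
      intro h; exact hk1 (by rw [← hs, h]; ring)
    obtain ⟨u, hu | hu⟩ := hL (2 * t)
    · -- u ^ 4 = 4 t² = 8 s (1+k)
      have hu8 : u ^ 4 = 8 * s * (1 + s ^ 2) := by
        linear_combination -hu + 4 * ht2 - 8 * s * hs
      refine ⟨2 * s / (1 + k), ?_⟩
      have hTk2 : AGM.Tk (2 * s / (1 + k)) := by
        refine ⟨div_ne_zero (by intro h; rcases mul_eq_zero.mp h with h'|h'; exact h2 h'; exact hs0 h') h1k, ?_, ?_⟩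
        · intro h
          rw [div_eq_one_iff_eq h1k] at h
          have hsq : (s - 1) ^ 2 = 0 := by linear_combination hs - h
          exact hsne1 (by have := pow_eq_zero_iff (n := 2) (by norm_num) |>.mp hsq; linear_combination this)
        · intro h
          rw [div_eq_iff h1k] at h
          have hsq : (s + 1) ^ 2 = 0 := by linear_combination hs + h
          exact hsnem1 (by have := pow_eq_zero_iff (n := 2) (by norm_num) |>.mp hsq; linear_combination this)
      refine ⟨⟨⟨hk0, hk1, hkm1⟩, hTk2, ?_⟩, hTk2, u * (1 + s) / (1 + k), ?_⟩
      · field_simp; linear_combination 4 * hs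
      · field_simp
        rw [← hs]
        linear_combination (-(1 + s) ^ 4) * hu8
    · have hu8 : u ^ 4 = -(8 * s * (1 + s ^ 2)) := by
        linear_combination hu - 4 * ht2 + 8 * s * hs
      refine ⟨-(2 * s) / (1 + k), ?_⟩
      have hTk2 : AGM.Tk (-(2 * s) / (1 + k)) := by
        refine ⟨div_ne_zero (by intro h; rcases mul_eq_zero.mp (neg_eq_zero.mp h) with h'|h'; exact h2 h'; exact hs0 h') h1k, ?_, ?_⟩
        · intro h
          rw [div_eq_one_iff_eq h1k] at h
          have hsq : (s + 1) ^ 2 = 0 := by linear_combination hs - h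
          exact hsnem1 (by have := pow_eq_zero_iff (n := 2) (by norm_num) |>.mp hsq; linear_combination this)
        · intro h
          rw [div_eq_iff h1k] at h
          have hsq : (s - 1) ^ 2 = 0 := by linear_combination hs + h
          exact hsne1 (by have := pow_eq_zero_iff (n := 2) (by norm_num) |>.mp hsq; linear_combination this)
      refine ⟨⟨⟨hk0, hk1, hkm1⟩, hTk2, ?_⟩, hTk2, u * (1 - s) / (1 + k), ?_⟩
      · field_simp; linear_combination 4 * hs
      · field_simp
        rw [← hs]
        linear_combination (-(1 - s) ^ 4) * hu8
  ext k
  simp only [Set.mem_setOf_eq]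
  constructor
  · intro hinf
    obtain ⟨k₂, ⟨hTk, hTk₂, heq⟩, k₃, ⟨hTk₂', hTk₃, heq₂⟩, -⟩ := hinf 2
    refine ⟨hTk.1, hTk.2.1, hTk.2.2, ?_⟩
    set v : F := (1 + k₂) * k₃ / 2 with hvdef
    have hv : v ^ 2 = k₂ := by
      rw [hvdef]; field_simp; linear_combination heq₂
    obtain ⟨u, hu | hu⟩ := hL v
    · have hk2sq : k₂ ^ 2 = (u ^ 2) ^ 4 := by
        rw [← hv]; linear_combination (v ^ 2 + u ^ 4) * hu
      exact ⟨(1 + k) * u ^ 2, by linear_combination -(1 + k) ^ 2 * heq + (1 + k) ^ 4 * hk2sq⟩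
    · have hk2sq : k₂ ^ 2 = (u ^ 2) ^ 4 := by
        rw [← hv]; linear_combination (v ^ 2 - u ^ 4) * hu
      exact ⟨(1 + k) * u ^ 2, by linear_combination -(1 + k) ^ 2 * heq + (1 + k) ^ 4 * hk2sq⟩
  · rintro ⟨hk0, hk1, hkm1, hfourth⟩ n
    have H : AGM.Tk k ∧ ∃ t : F, 4 * k * (1 + k) ^ 2 = t ^ 4 := ⟨⟨hk0, hk1, hkm1⟩, hfourth⟩
    clear hk0 hk1 hkm1 hfourth
    induction n generalizing k with
    | zero => exact H.1
    | succ n ih =>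
      obtain ⟨k₂, hadv, hk₂⟩ := step k H
      exact ⟨k₂, hadv, ih k₂ hk₂⟩
end

section
/- Let F be a finite field with q elements where q ≡ 5 (mod 8). Then 4·|T_F^{adv_∞}| + 7 = |{ (x,y) ∈ F² : y² = x³ − x }|. (Equivalently, |T_F^{adv_∞}| = (q − a_q − 7)/4, where a_q = q − |{(x,y) ∈ F² : y² = x³ − x}| is the trace of Frobenius of the elliptic curve y² = x³ − x over F.) -/
namespace Stmt8Aux

open AGM Finset

variable {F : Type*} [Field F] [Fintype F]

/-- `s` is a "good square root": `s ∉ {1,-1}` and `s³+s` is a nonsquare. -/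
def Yp (s : F) : Prop := s ≠ 1 ∧ s ≠ -1 ∧ ¬ IsSquare (s ^ 3 + s)

/-- `k` is a square of a good square root. -/
def Wp (k : F) : Prop := ∃ s : F, Yp s ∧ s ^ 2 = k

lemma ns_ne_zero {a : F} (ha : ¬ IsSquare a) : a ≠ 0 := by
  rintro rfl; exact ha (IsSquare.zero)

lemma ns_mul_ns {a b : F} (ha : ¬ IsSquare a) (hb : ¬ IsSquare b) :
    IsSquare (a * b) := by
  classical
  have ha0 := ns_ne_zero ha
  have hb0 := ns_ne_zero hb
  have h1 : quadraticChar F a = -1 := quadraticChar_neg_one_iff_not_isSquare.mpr ha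
  have h2 : quadraticChar F b = -1 := quadraticChar_neg_one_iff_not_isSquare.mpr hb
  have : quadraticChar F (a * b) = 1 := by rw [map_mul, h1, h2]; ring
  exact (quadraticChar_one_iff_isSquare (mul_ne_zero ha0 hb0)).mp this

lemma ns_mul_sq {a b : F} (ha : ¬ IsSquare a) (hb : IsSquare b) (hb0 : b ≠ 0) :
    ¬ IsSquare (a * b) := by
  classical
  have ha0 := ns_ne_zero ha
  intro hab
  have h1 : quadraticChar F a = -1 := quadraticChar_neg_one_iff_not_isSquare.mpr ha
  have h2 : quadraticChar F b = 1 := (quadraticChar_one_iff_isSquare hb0).mpr hb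
  have h3 : quadraticChar F (a * b) = 1 :=
    (quadraticChar_one_iff_isSquare (mul_ne_zero ha0 hb0)).mpr hab
  rw [map_mul, h1, h2] at h3; norm_num at h3

section Facts

variable (h2 : ¬ IsSquare (2 : F)) {i : F} (hi : i * i = -1) (hni : ¬ IsSquare i)

include h2 in
lemma two_ne_zero'' : (2 : F) ≠ 0 := ns_ne_zero h2

include h2 in
lemma neg_one_ne_one' : (-1 : F) ≠ 1 := by
  intro h
  have : (2 : F) = 0 := by linear_combination -h
  exact two_ne_zero'' h2 this

include hi in
lemma i_ne_zero : i ≠ 0 := by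
  rintro rfl
  simpa using hi.symm

include hi in
lemma isSq_neg_one : IsSquare (-1 : F) := ⟨i, hi.symm⟩

include h2 hi in
lemma Yp.s_ne_zero {s : F} (hs : Yp s) : s ≠ 0 := by
  rintro rfl
  exact hs.2.2 (by norm_num)

include h2 hi in
lemma Yp.sq_ne_neg_one {s : F} (hs : Yp s) : s ^ 2 ≠ -1 := by
  intro h
  apply hs.2.2
  have : s ^ 3 + s = 0 := by linear_combination s * h
  rw [this]; exact IsSquare.zero

include h2 hi in
lemma Yp.tk {s : F} (hs : Yp s) : Tk (s ^ 2) := by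
  refine ⟨pow_ne_zero _ (hs.s_ne_zero h2 hi), ?_, hs.sq_ne_neg_one h2 hi⟩
  intro h
  have : (s - 1) * (s + 1) = 0 := by linear_combination h
  rcases mul_eq_zero.mp this with h' | h'
  · exact hs.1 (by linear_combination h')
  · exact hs.2.1 (by linear_combination h')

include h2 hi in
lemma Yp.neg {s : F} (hs : Yp s) : Yp (-s) := by
  refine ⟨fun h => hs.2.1 (by linear_combination -h), fun h => hs.1 (by linear_combination -h), ?_⟩
  intro h
  apply hs.2.2
  have he : s ^ 3 + s = (-1) * ((-s) ^ 3 + (-s)) := by ring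
  rw [he]
  exact (isSq_neg_one hi).mul h

include h2 hi hni in
lemma Yp.step {s : F} (hs : Yp s) :
    ∃ t : F, Yp t ∧ kAdv (s ^ 2) (t ^ 2) := by
  classical
  have hs0 : s ≠ 0 := hs.s_ne_zero h2 hi
  have hTk : Tk (s ^ 2) := hs.tk h2 hi
  have hd : 1 + s ^ 2 ≠ 0 := by
    intro h
    exact hTk.2.2 (by linear_combination h)
  have hcube : s ^ 3 + s ≠ 0 := ns_ne_zero hs.2.2
  -- 2(s³+s) is a square
  obtain ⟨r, hr⟩ : IsSquare ((2 : F) * (s ^ 3 + s)) := ns_mul_ns h2 hs.2.2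
  have hr0 : r ≠ 0 := by
    intro h
    rw [h, mul_zero] at hr
    exact (mul_ne_zero (two_ne_zero'' h2) hcube) hr
  set t : F := r / (1 + s ^ 2) with ht
  have hr2 : r ^ 2 = 2 * s * (1 + s ^ 2) := by linear_combination -hr
  have ht2 : t ^ 2 = 2 * s / (1 + s ^ 2) := by
    rw [ht, div_pow, hr2]
    rw [div_eq_div_iff (pow_ne_zero _ hd) hd]
    ring
  have ht0 : t ≠ 0 := div_ne_zero hr0 hd
  have htk0 : t ^ 2 ≠ 0 := pow_ne_zero _ ht0
  have htk1 : t ^ 2 ≠ 1 := by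
    rw [ht2]
    intro h
    rw [div_eq_one_iff_eq hd] at h
    have h' : (s - 1) ^ 2 = 0 := by linear_combination -h
    have hs1 : s - 1 = 0 := pow_eq_zero_iff (n := 2) (by norm_num) |>.mp h'
    exact hs.1 (by linear_combination hs1)
  have htkm1 : t ^ 2 ≠ -1 := by
    rw [ht2]
    intro h
    rw [div_eq_iff hd] at h
    have h' : (s + 1) ^ 2 = 0 := by linear_combination h
    have hs1 : s + 1 = 0 := pow_eq_zero_iff (n := 2) (by norm_num) |>.mp h'
    exact hs.2.1 (by linear_combination hs1)
  have hTk' : Tk (t ^ 2) := ⟨htk0, htk1, htkm1⟩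
  have hadv : kAdv (s ^ 2) (t ^ 2) := by
    refine ⟨hTk, hTk', ?_⟩
    rw [ht2]
    field_simp
    ring
  have h1pt : 1 + t ^ 2 ≠ 0 := by
    intro h; exact htkm1 (by linear_combination h)
  have h1mt : 1 - t ^ 2 ≠ 0 := by
    intro h; exact htk1 (by linear_combination -h)
  by_cases hc : IsSquare (t ^ 3 + t)
  · -- use i*t
    have hit2 : (i * t) ^ 2 = -(t ^ 2) := by
      have : (i * t) ^ 2 = (i * i) * t ^ 2 := by ring
      rw [this, hi]; ring
    have hTkneg : Tk ((i * t) ^ 2) := by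
      rw [hit2]
      refine ⟨neg_ne_zero.mpr htk0, ?_, ?_⟩
      · intro h; exact htkm1 (by linear_combination -h)
      · intro h; exact htk1 (by linear_combination -h)
    have hadv' : kAdv (s ^ 2) ((i * t) ^ 2) := by
      refine ⟨hTk, hTkneg, ?_⟩
      rw [hit2]
      have : (-(t ^ 2)) ^ 2 = (t ^ 2) ^ 2 := by ring
      rw [this]
      exact hadv.2.2
    refine ⟨i * t, ⟨?_, ?_, ?_⟩, hadv'⟩
    · intro h
      apply htkm1
      have : (i * t) ^ 2 = 1 := by rw [h]; norm_num
      rw [hit2] at this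
      linear_combination -this
    · intro h
      apply htkm1
      have : (i * t) ^ 2 = 1 := by rw [h]; norm_num
      rw [hit2] at this
      linear_combination -this
    · -- (i t)³ + i t = i * (t (1 - t²)), which is nonsquare
      have hexp : (i * t) ^ 3 + i * t = i * (t * (1 - t ^ 2)) := by
        linear_combination (i * t ^ 3) * hi
      rw [hexp]
      -- t(1-t²) is a nonzero square
      have hA : IsSquare (t * (1 + t ^ 2)) := by
        have : t * (1 + t ^ 2) = t ^ 3 + t := by ring
        rw [this]; exact hc
      have hB : IsSquare ((1 - t ^ 2) * (1 + t ^ 2)) := by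
        have hval : (1 - t ^ 2) * (1 + t ^ 2) = ((1 - s ^ 2) / (1 + s ^ 2)) ^ 2 := by
          rw [ht2]
          field_simp
          ring
        rw [hval]
        exact ⟨(1 - s ^ 2) / (1 + s ^ 2), by ring⟩
      have hsq : IsSquare (t * (1 - t ^ 2)) := by
        have hval : t * (1 - t ^ 2)
            = (t * (1 + t ^ 2)) * ((1 - t ^ 2) * (1 + t ^ 2)) * (1 / (1 + t ^ 2)) ^ 2 := by
          field_simp
        rw [hval]
        exact ((hA.mul hB).mul ⟨1 / (1 + t ^ 2), by ring⟩)
      have hne : t * (1 - t ^ 2) ≠ 0 := mul_ne_zero ht0 h1mt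
      exact ns_mul_sq hni hsq hne
  · -- use t itself
    refine ⟨t, ⟨?_, ?_, hc⟩, hadv⟩
    · intro h; exact hTk'.2.1 (by rw [h]; norm_num)
    · intro h; exact hTk'.2.1 (by rw [h]; norm_num)

include h2 hi hni in
lemma Wp_TAdvN : ∀ (n : ℕ) (k : F), Wp k → TAdvN n k := by
  intro n
  induction n with
  | zero =>
    rintro k ⟨s, hs, rfl⟩
    exact hs.tk h2 hi
  | succ n ih =>
    rintro k ⟨s, hs, rfl⟩
    obtain ⟨t, ht, hadv⟩ := hs.step h2 hi hni
    exact ⟨t ^ 2, hadv, ih _ ⟨t, ht, rfl⟩⟩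

include h2 hi in
lemma TAdvN2_Wp {k : F} (h : TAdvN 2 k) : Wp k := by
  obtain ⟨k₁, ⟨hTk, hTk₁, heq⟩, k₂, ⟨_, hTk₂, heq₂⟩, -⟩ := h
  have h1k : (1 : F) + k ≠ 0 := fun h => hTk.2.2 (by linear_combination h)
  have h1k₁ : (1 : F) + k₁ ≠ 0 := fun h => hTk₁.2.2 (by linear_combination h)
  have h20 : (2 : F) ≠ 0 := two_ne_zero'' h2
  set s : F := (1 + k) * k₁ / 2 with hsdef
  have hs2 : s ^ 2 = k := by
    rw [hsdef]
    field_simp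
    linear_combination heq
  have hs0 : s ≠ 0 := by
    intro h
    exact hTk.1 (by rw [← hs2, h]; ring)
  refine ⟨s, ⟨?_, ?_, ?_⟩, hs2⟩
  · intro h
    exact hTk.2.1 (by rw [← hs2, h]; ring)
  · intro h
    exact hTk.2.1 (by rw [← hs2, h]; ring)
  · -- ¬ IsSquare (s³ + s)
    intro hsq
    set r : F := (1 + k₁) * k₂ with hrdef
    have hr4 : r ^ 2 = 4 * k₁ := by rw [hrdef]; linear_combination heq₂
    have h2s : 2 * s = (1 + k) * k₁ := by rw [hsdef]; field_simp
    have hcube : s ^ 3 + s = s * (1 + k) := by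
      rw [← hs2]; ring
    have hkey8 : 8 * (s ^ 3 + s) = ((1 + k) * r) ^ 2 := by
      linear_combination 8 * hcube + 4 * (1 + k) * h2s - (1 + k) ^ 2 * hr4
    have hne : s ^ 3 + s ≠ 0 := by
      rw [hcube]
      exact mul_ne_zero hs0 h1k
    obtain ⟨c, hc⟩ := hsq
    have hc0 : c ≠ 0 := by
      intro h
      rw [h, mul_zero] at hc
      exact hne hc
    have h2c : (2 : F) * c ≠ 0 := mul_ne_zero h20 hc0
    apply h2
    refine ⟨(1 + k) * r / (2 * c), ?_⟩
    rw [div_mul_div_comm, eq_div_iff (mul_ne_zero h2c h2c)]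
    linear_combination hkey8 - 8 * hc

include h2 hi hni in
lemma TAdvInf_iff_Wp {k : F} : TAdvInf k ↔ Wp k :=
  ⟨fun h => TAdvN2_Wp h2 hi (h 2), fun h n => Wp_TAdvN h2 hi hni n k h⟩

end Facts

end Stmt8Aux

theorem stmt8 {F : Type*} [Field F] [Fintype F] (q : ℕ)
    (hq : Fintype.card F = q) (h5 : q % 8 = 5) :
    4 * Nat.card {k : F // AGM.TAdvInf k} + 7 =
      Nat.card {p : F × F // p.2 ^ 2 = p.1 ^ 3 - p.1} := by
  classical
  open AGM Finset Stmt8Aux in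
  -- basic square facts
  have h2 : ¬ IsSquare (2 : F) := by
    intro h
    exact (FiniteField.isSquare_two_iff.mp h).2 (by rw [hq]; exact h5)
  have hm1 : IsSquare (-1 : F) := by
    rw [FiniteField.isSquare_neg_one_iff, hq]
    omega
  obtain ⟨i, hi'⟩ := hm1
  have hi : i * i = -1 := hi'.symm
  have hm1' : IsSquare (-1 : F) := ⟨i, hi'⟩
  have h20 : (2 : F) ≠ 0 := Stmt8Aux.two_ne_zero'' h2
  have hi0 : i ≠ 0 := Stmt8Aux.i_ne_zero hi
  have hq1 : 1 ≤ q := by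
    rw [← hq]; exact Fintype.card_pos
  -- i is a nonsquare
  have hni : ¬ IsSquare i := by
    rintro ⟨c, hc⟩
    have hc4 : c ^ 4 = -1 := by
      have : c ^ 4 = (c * c) * (c * c) := by ring
      rw [this, ← hc, hi]
    have hc0 : c ≠ 0 := by
      intro h
      rw [h] at hc4
      norm_num at hc4
    set u : Fˣ := Units.mk0 c hc0 with hu
    have huv : (u : F) = c := rfl
    have hu8 : u ^ 8 = 1 := by
      have h8 : ((u ^ 8 : Fˣ) : F) = 1 := by
        rw [Units.val_pow_eq_pow_val, huv]
        have : c ^ 8 = (c ^ 4) ^ 2 := by ring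
        rw [this, hc4]; ring
      exact Units.val_eq_one.mp h8
    have hdvd8 : orderOf u ∣ 8 := orderOf_dvd_of_pow_eq_one hu8
    have hnd4 : ¬ orderOf u ∣ 4 := by
      intro h
      have hu4 : u ^ 4 = 1 := orderOf_dvd_iff_pow_eq_one.mp h
      have : ((u ^ 4 : Fˣ) : F) = 1 := by rw [hu4]; rfl
      rw [Units.val_pow_eq_pow_val, huv, hc4] at this
      exact Stmt8Aux.neg_one_ne_one' h2 this
    have hord : orderOf u = 8 := by
      have h8 : (8 : ℕ) = 2 ^ 3 := by norm_num
      rw [h8] at hdvd8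
      obtain ⟨j, hj, he⟩ := (Nat.dvd_prime_pow Nat.prime_two).mp hdvd8
      interval_cases j <;> simp_all <;> omega
    have hcard : orderOf u ∣ Fintype.card Fˣ := orderOf_dvd_card
    rw [hord, Fintype.card_units, hq] at hcard
    omega
  -- finsets
  set Wf : Finset F := univ.filter (fun k => Stmt8Aux.Wp k) with hWf
  set Yf : Finset F := univ.filter (fun s => Stmt8Aux.Yp s) with hYf
  set Gf : Finset F := univ.filter (fun x => x ^ 3 - x ≠ 0 ∧ IsSquare (x ^ 3 - x)) with hGf
  set Zf : Finset F :=
    univ.filter (fun x => x ≠ i ∧ x ≠ -i ∧ x ^ 3 - x ≠ 0 ∧ IsSquare (x ^ 3 - x)) with hZf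
  -- LHS
  have hLHS : Nat.card {k : F // AGM.TAdvInf k} = Wf.card := by
    rw [Nat.card_eq_fintype_card, Fintype.card_subtype, hWf]
    congr 1
    apply Finset.filter_congr
    intro k _
    simp only [Stmt8Aux.TAdvInf_iff_Wp h2 hi hni]
  -- RHS as a sum of fibers
  have hRHS : Nat.card {p : F × F // p.2 ^ 2 = p.1 ^ 3 - p.1}
      = ∑ x : F, (univ.filter (fun y : F => y ^ 2 = x ^ 3 - x)).card := by
    rw [Nat.card_eq_fintype_card,
      Fintype.card_congr (Equiv.subtypeProdEquivSigmaSubtype (fun a b : F => b ^ 2 = a ^ 3 - a)),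
      Fintype.card_sigma]
    congr 1
    ext x
    rw [Fintype.card_subtype]
  -- fiber counting
  have hfib0 : ∀ a : F, a = 0 → (univ.filter (fun y : F => y ^ 2 = a)).card = 1 := by
    rintro a rfl
    have : (univ.filter (fun y : F => y ^ 2 = 0)) = {0} := by
      ext y
      simp [pow_eq_zero_iff]
    rw [this, Finset.card_singleton]
  have hfib2 : ∀ a : F, a ≠ 0 → IsSquare a →
      (univ.filter (fun y : F => y ^ 2 = a)).card = 2 := by
    rintro a ha0 ⟨c, rfl⟩
    have hc0 : c ≠ 0 := by
      intro h; rw [h] at ha0; exact ha0 (by ring)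
    have : (univ.filter (fun y : F => y ^ 2 = c * c)) = {c, -c} := by
      ext y
      simp only [Finset.mem_filter, Finset.mem_univ, true_and, Finset.mem_insert,
        Finset.mem_singleton]
      constructor
      · intro h
        have : (y - c) * (y + c) = 0 := by linear_combination h
        rcases mul_eq_zero.mp this with h' | h'
        · left; linear_combination h'
        · right; linear_combination h'
      · rintro (rfl | rfl) <;> ring
    rw [this, Finset.card_insert_of_notMem, Finset.card_singleton]
    simp only [Finset.mem_singleton]
    intro h
    apply hc0
    have : (2 : F) * c = 0 := by linear_combination h
    rcases mul_eq_zero.mp this with h' | h'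
    · exact absurd h' h20
    · exact h'
  have hfibns : ∀ a : F, ¬ IsSquare a →
      (univ.filter (fun y : F => y ^ 2 = a)).card = 0 := by
    intro a ha
    rw [Finset.card_eq_zero]
    ext y
    simp only [Finset.mem_filter, Finset.mem_univ, true_and, Finset.notMem_empty, iff_false]
    intro h
    exact ha ⟨y, by rw [← h]; ring⟩
  -- sum = 3 + 2 * Gf.card
  have hsum : ∑ x : F, (univ.filter (fun y : F => y ^ 2 = x ^ 3 - x)).card
      = 3 + 2 * Gf.card := by
    rw [← Finset.sum_filter_add_sum_filter_not univ (fun x : F => x ^ 3 - x = 0)]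
    have hz : (univ.filter (fun x : F => x ^ 3 - x = 0)) = {0, 1, -1} := by
      ext x
      simp only [Finset.mem_filter, Finset.mem_univ, true_and, Finset.mem_insert,
        Finset.mem_singleton]
      constructor
      · intro h
        have : x * ((x - 1) * (x + 1)) = 0 := by linear_combination h
        rcases mul_eq_zero.mp this with h' | h'
        · left; exact h'
        · rcases mul_eq_zero.mp h' with h'' | h''
          · right; left; linear_combination h''
          · right; right; linear_combination h''
      · rintro (rfl | rfl | rfl) <;> ring
    have hzsum : ∑ x ∈ univ.filter (fun x : F => x ^ 3 - x = 0),
        (univ.filter (fun y : F => y ^ 2 = x ^ 3 - x)).card = 3 := by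
      rw [Finset.sum_congr rfl (fun x hx => hfib0 _ (Finset.mem_filter.mp hx).2),
        Finset.sum_const, smul_eq_mul, mul_one, hz]
      rw [Finset.card_insert_of_notMem, Finset.card_insert_of_notMem, Finset.card_singleton]
      · simp only [Finset.mem_singleton]
        intro h
        exact Stmt8Aux.neg_one_ne_one' h2 h.symm
      · simp only [Finset.mem_insert, Finset.mem_singleton]
        push_neg
        constructor
        · intro h; exact one_ne_zero h.symm
        · intro h
          exact h20 (by linear_combination 2 * h)
    rw [hzsum]
    congr 1
    -- now the nonzero part
    rw [← Finset.sum_filter_add_sum_filter_not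
      (univ.filter (fun x : F => ¬ x ^ 3 - x = 0)) (fun x : F => IsSquare (x ^ 3 - x))]
    have hGeq : (univ.filter (fun x : F => ¬ x ^ 3 - x = 0)).filter
        (fun x : F => IsSquare (x ^ 3 - x)) = Gf := by
      rw [Finset.filter_filter, hGf]
    rw [hGeq]
    have hA : ∑ x ∈ Gf, (univ.filter (fun y : F => y ^ 2 = x ^ 3 - x)).card = 2 * Gf.card := by
      rw [Finset.sum_congr rfl (fun x hx => by
        have hx' := Finset.mem_filter.mp (hGf ▸ hx)
        exact hfib2 _ hx'.2.1 hx'.2.2), Finset.sum_const, smul_eq_mul, mul_comm]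
    have hB : ∑ x ∈ (univ.filter (fun x : F => ¬ x ^ 3 - x = 0)).filter
        (fun x : F => ¬ IsSquare (x ^ 3 - x)),
        (univ.filter (fun y : F => y ^ 2 = x ^ 3 - x)).card = 0 := by
      apply Finset.sum_eq_zero
      intro x hx
      exact hfibns _ (Finset.mem_filter.mp hx).2
    rw [hA, hB, add_zero]
  -- Gf.card = Zf.card + 2
  have hii : i ≠ -i := by
    intro h
    apply hi0
    have : (2 : F) * i = 0 := by linear_combination h
    rcases mul_eq_zero.mp this with h' | h'
    · exact absurd h' h20
    · exact h'
  have hn2 : ¬ IsSquare (-2 : F) := by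
    intro h
    apply h2
    have : (2 : F) = (-1) * (-2) := by ring
    rw [this]
    exact hm1'.mul h
  have hiG : i ∈ Gf := by
    rw [hGf]
    simp only [Finset.mem_filter, Finset.mem_univ, true_and]
    have hval : i ^ 3 - i = (-2) * i := by linear_combination i * hi
    rw [hval]
    exact ⟨mul_ne_zero (by intro h; exact h20 (by linear_combination -h)) hi0,
      ns_mul_ns hn2 hni⟩
  have hmiG : -i ∈ Gf := by
    rw [hGf]
    simp only [Finset.mem_filter, Finset.mem_univ, true_and]
    have hval : (-i) ^ 3 - (-i) = 2 * i := by linear_combination -i * hi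
    rw [hval]
    exact ⟨mul_ne_zero h20 hi0, ns_mul_ns h2 hni⟩
  have hGZ : Gf = insert i (insert (-i) Zf) := by
    ext x
    rw [hGf, hZf]
    simp only [Finset.mem_filter, Finset.mem_univ, true_and, Finset.mem_insert]
    constructor
    · intro h
      by_cases h1 : x = i
      · left; exact h1
      by_cases h2' : x = -i
      · right; left; exact h2'
      · right; right; exact ⟨h1, h2', h⟩
    · rintro (rfl | rfl | ⟨-, -, h⟩)
      · have := Finset.mem_filter.mp (hGf ▸ hiG)
        exact this.2
      · have := Finset.mem_filter.mp (hGf ▸ hmiG)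
        exact this.2
      · exact h
  have hiZ : i ∉ insert (-i) Zf := by
    simp only [Finset.mem_insert, hZf, Finset.mem_filter, Finset.mem_univ, true_and]
    push_neg
    exact ⟨hii, fun h _ _ => absurd rfl h⟩
  have hmiZ : -i ∉ Zf := by
    simp only [hZf, Finset.mem_filter, Finset.mem_univ, true_and]
    push_neg
    intro _ h
    exact absurd rfl h
  have hGcard : Gf.card = Zf.card + 2 := by
    rw [hGZ, Finset.card_insert_of_notMem hiZ, Finset.card_insert_of_notMem hmiZ]
  -- Zf.card = Yf.card
  have hinv : (-i) * i = 1 := by linear_combination -hi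
  have hZY : Zf.card = Yf.card := by
    apply Finset.card_nbij' (fun x => (-i) * x) (fun s => i * s)
    · -- maps Zf to Yf
      intro x hx
      rw [hZf] at hx
      rw [hYf]
      simp only [Finset.mem_coe, Finset.mem_filter, Finset.mem_univ, true_and] at hx ⊢
      obtain ⟨hx1, hx2, hx3, hx4⟩ := hx
      refine ⟨?_, ?_, ?_⟩
      · intro h
        apply hx1
        have : x = i * ((-i) * x) := by linear_combination (-x) * hinv
        rw [this, h, mul_one]
      · intro h
        apply hx2
        have : x = i * ((-i) * x) := by linear_combination (-x) * hinv
        rw [this, h]; ring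
      · -- ((-i)x)³ + (-i)x = i (x³ - x)
        have hval : ((-i) * x) ^ 3 + (-i) * x = i * (x ^ 3 - x) := by
          linear_combination (-(x ^ 3) * i) * hi
        rw [hval]
        exact ns_mul_sq hni hx4 hx3
    · -- maps Yf to Zf
      intro s hs
      rw [hYf] at hs
      rw [hZf]
      simp only [Finset.mem_coe, Finset.mem_filter, Finset.mem_univ, true_and] at hs ⊢
      obtain ⟨hs1, hs2, hs3⟩ := hs
      have hs0 : s ≠ 0 := by
        rintro rfl
        exact hs3 (by norm_num)
      have hcube : s ^ 3 + s ≠ 0 := ns_ne_zero hs3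
      have hval : (i * s) ^ 3 - i * s = ((-1) * i) * (s ^ 3 + s) := by
        linear_combination (i * s ^ 3) * hi
      refine ⟨?_, ?_, ?_, ?_⟩
      · intro h
        apply hs1
        have := mul_left_cancel₀ hi0 (h.trans (mul_one i).symm)
        exact this
      · intro h
        apply hs2
        have : i * s = i * (-1) := by rw [h]; ring
        exact mul_left_cancel₀ hi0 this
      · rw [hval]
        have hm10 : (-1 : F) ≠ 0 := by
          intro h
          exact one_ne_zero (show (1 : F) = 0 by linear_combination -h)
        exact mul_ne_zero (mul_ne_zero hm10 hi0) hcube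
      · rw [hval]
        have hnmi : ¬ IsSquare ((-1 : F) * i) := by
          intro h
          apply hni
          have : i = (-1) * ((-1) * i) := by ring
          rw [this]
          exact hm1'.mul h
        exact ns_mul_ns hnmi hs3
    · intro x _
      linear_combination x * hinv
    · intro x _
      linear_combination x * hinv
  -- Yf.card = 2 * Wf.card
  have hYW : Yf.card = 2 * Wf.card := by
    rw [Finset.card_eq_sum_card_fiberwise (f := fun s : F => s ^ 2) (t := Wf)
      (by
        intro s hs
        rw [hYf] at hs
        rw [hWf]
        simp only [Finset.mem_coe, Finset.mem_filter, Finset.mem_univ, true_and] at hs ⊢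
        exact ⟨s, hs, rfl⟩)]
    rw [Finset.sum_congr rfl (fun k hk => ?_), Finset.sum_const, smul_eq_mul, mul_comm]
    -- fiber over k ∈ Wf has card 2
    rw [hWf] at hk
    simp only [Finset.mem_filter, Finset.mem_univ, true_and] at hk
    obtain ⟨s₀, hs₀, hk₀⟩ := hk
    have hs00 : s₀ ≠ 0 := hs₀.s_ne_zero h2 hi
    have hfiber : (Yf.filter (fun s : F => s ^ 2 = k)) = {s₀, -s₀} := by
      ext s
      simp only [Finset.mem_filter, hYf, Finset.mem_univ, true_and, Finset.mem_insert,
        Finset.mem_singleton]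
      constructor
      · rintro ⟨-, hsq⟩
        have : (s - s₀) * (s + s₀) = 0 := by
          linear_combination hsq - hk₀
        rcases mul_eq_zero.mp this with h' | h'
        · left; linear_combination h'
        · right; linear_combination h'
      · rintro (rfl | rfl)
        · exact ⟨hs₀, hk₀⟩
        · exact ⟨hs₀.neg h2 hi, by rw [← hk₀]; ring⟩
    rw [hfiber, Finset.card_insert_of_notMem, Finset.card_singleton]
    simp only [Finset.mem_singleton]
    intro h
    apply hs00
    have : (2 : F) * s₀ = 0 := by linear_combination h
    rcases mul_eq_zero.mp this with h' | h'
    · exact absurd h' h20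
    · exact h'
  -- combine
  rw [hLHS, hRHS, hsum, hGcard, hZY, hYW]
  omega
end

section
/- Let F be a finite field with q elements where q ≡ 5 (mod 8). Then 4·|S_F^{adv_∞}| + 7·(q−1) = (q−1)·|{ (x,y) ∈ F² : y² = x³ − x }|. (Equivalently, |S_F^{adv_∞}| = ((q−1)/4)·(q − a_q − 7), where a_q = q − |{(x,y) ∈ F² : y² = x³ − x}| is the trace of Frobenius of the elliptic curve y² = x³ − x over F.) -/
open AGM Finset

section Aux

variable {F : Type*} [Field F] [Fintype F]

def Good (p : F × F) : Prop :=
  AGM.Nontriv p ∧ ∃ d e : F, d ^ 2 = p.1 * p.2 ∧ 2 * e ^ 2 = (p.1 + p.2) * d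

lemma nonsq_mul {x y : F} (hx0 : x ≠ 0) (hy0 : y ≠ 0)
    (hx : ¬ IsSquare x) (hy : ¬ IsSquare y) : IsSquare (x * y) := by
  classical
  have h1 : quadraticChar F x = -1 := quadraticChar_neg_one_iff_not_isSquare.mpr hx
  have h2 : quadraticChar F y = -1 := quadraticChar_neg_one_iff_not_isSquare.mpr hy
  have h3 : quadraticChar F (x * y) = 1 := by rw [map_mul, h1, h2]; ring
  exact (quadraticChar_one_iff_isSquare (mul_ne_zero hx0 hy0)).mp h3

variable {i : F}

lemma good_step (h2 : (2 : F) ≠ 0) (hii : i ^ 2 = -1) (hns : ¬ IsSquare i)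
    {p : F × F} (hp : Good p) : ∃ q, AGM.Adv p q ∧ Good q := by
  obtain ⟨a, b⟩ := p
  obtain ⟨⟨ha, hb, hab, hab'⟩, d, e, hd, he⟩ := hp
  have hi0 : i ≠ 0 := by
    intro h; rw [h] at hii; norm_num at hii
  have hd0 : d ≠ 0 := by
    intro h
    have := mul_ne_zero ha hb
    rw [← hd, h] at this; norm_num at this
  have he0 : e ≠ 0 := by
    intro h
    rw [h] at he; norm_num at he
    rcases he with h' | h'
    · exact hab h'
    · exact hd0 h'
  obtain ⟨c, h2c⟩ : ∃ c : F, 2 * c = a + b := ⟨(a + b) * 2⁻¹, by field_simp⟩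
  have hc0 : c ≠ 0 := by
    intro h; rw [h, mul_zero] at h2c; exact hab h2c.symm
  have hprod : 4 * ((c + d) * (c - d)) = (a - b) ^ 2 := by
    linear_combination (2 * c + a + b) * h2c - 4 * hd
  have hcdne : (c + d) * (c - d) ≠ 0 := by
    intro h
    apply hab'
    have h4 : (a - b) ^ 2 = 0 := by rw [← hprod, h, mul_zero]
    exact pow_eq_zero_iff (two_ne_zero) |>.mp h4
  obtain ⟨hcd1, hcd2⟩ := mul_ne_zero_iff.mp hcdne
  have he' : e ^ 2 = c * d := by
    have h : 2 * e ^ 2 = 2 * (c * d) := by linear_combination he - d * h2c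
    exact mul_left_cancel₀ h2 h
  have key : IsSquare (2 * ((c + d) * e)) ∨ IsSquare (2 * ((c - d) * (i * e))) := by
    by_contra hcon
    push_neg at hcon
    obtain ⟨h1, h1'⟩ := hcon
    have hx0 : 2 * ((c + d) * e) ≠ 0 := mul_ne_zero h2 (mul_ne_zero hcd1 he0)
    have hy0 : 2 * ((c - d) * (i * e)) ≠ 0 :=
      mul_ne_zero h2 (mul_ne_zero hcd2 (mul_ne_zero hi0 he0))
    have hsq := nonsq_mul hx0 hy0 h1 h1'
    have heq : 2 * ((c + d) * e) * (2 * ((c - d) * (i * e)))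
        = i * ((a - b) * e) ^ 2 := by
      linear_combination (i * e ^ 2) * hprod
    rw [heq] at hsq
    obtain ⟨t, ht⟩ := hsq
    apply hns
    have hw0 : (a - b) * e ≠ 0 := mul_ne_zero hab' he0
    refine ⟨t * ((a - b) * e)⁻¹, ?_⟩
    field_simp
    linear_combination ht
  rcases key with ⟨E, hE⟩ | ⟨E, hE⟩
  · refine ⟨(c, d), ⟨⟨ha, hb, hab, hab'⟩, ⟨hc0, hd0, hcd1, hcd2⟩, h2c, hd⟩,
      ⟨hc0, hd0, hcd1, hcd2⟩, e, E * 2⁻¹, he', ?_⟩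
    show 2 * (E * 2⁻¹) ^ 2 = (c + d) * e
    have h4 : (2 : F) * 2 ≠ 0 := mul_ne_zero h2 h2
    field_simp
    linear_combination (-1 : F) * hE
  · refine ⟨(c, -d), ⟨⟨ha, hb, hab, hab'⟩,
      ⟨hc0, neg_ne_zero.mpr hd0, ?_, ?_⟩, h2c, by linear_combination hd⟩,
      ⟨hc0, neg_ne_zero.mpr hd0, ?_, ?_⟩, i * e, E * 2⁻¹, ?_, ?_⟩
    · show c + -d ≠ 0; rw [← sub_eq_add_neg]; exact hcd2
    · show c - -d ≠ 0; rw [sub_neg_eq_add]; exact hcd1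
    · show c + -d ≠ 0; rw [← sub_eq_add_neg]; exact hcd2
    · show c - -d ≠ 0; rw [sub_neg_eq_add]; exact hcd1
    · show (i * e) ^ 2 = c * (-d)
      linear_combination e ^ 2 * hii - he'
    · show 2 * (E * 2⁻¹) ^ 2 = (c + -d) * (i * e)
      field_simp
      linear_combination (-1 : F) * hE

lemma good_advN (h2 : (2 : F) ≠ 0) (hii : i ^ 2 = -1) (hns : ¬ IsSquare i) :
    ∀ (n : ℕ) (p : F × F), Good p → AGM.AdvN n p := by
  intro n
  induction n with
  | zero => exact fun p hp => hp.1
  | succ n ih =>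
    intro p hp
    obtain ⟨q, hq, hg⟩ := good_step h2 hii hns hp
    exact ⟨q, hq, ih q hg⟩

lemma advInf_iff_good (h2 : (2 : F) ≠ 0) (hii : i ^ 2 = -1) (hns : ¬ IsSquare i) (p : F × F) :
    AGM.AdvInf p ↔ Good p := by
  constructor
  · intro h
    obtain ⟨q, hpq, r, hqr, -⟩ := h 2
    exact ⟨hpq.1, q.2, r.2, hpq.2.2.2, by linear_combination 2 * hqr.2.2.2 + q.2 * hpq.2.2.1⟩
  · exact fun hg n => good_advN h2 hii hns n p hg

end Aux

section Count

open Finset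

variable {F : Type*} [Field F] [Fintype F]

lemma main_count {i s : F} (h2 : (2 : F) ≠ 0) (hii : i ^ 2 = -1) (hs2 : s ^ 2 = 2 * i) :
    4 * Nat.card {p : F × F // Good p} + 7 * (Fintype.card F - 1)
      = (Fintype.card F - 1) * Nat.card {w : F × F // w.2 ^ 2 = w.1 ^ 3 - w.1} := by
  classical
  have hi0 : i ≠ 0 := by intro h; rw [h] at hii; norm_num at hii
  have hs0 : s ≠ 0 := by
    intro h; rw [h] at hs2; norm_num at hs2
    rcases hs2 with h' | h'
    · exact h2 h'
    · exact hi0 h'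
  set G : Finset (F × F) := univ.filter (Good (F := F)) with hGdef
  set Gh : Finset (F × F × F × F) := univ.filter
    (fun v : F × F × F × F => AGM.Nontriv (v.1, v.2.1) ∧ v.2.2.1 ^ 2 = v.1 * v.2.1 ∧
      2 * v.2.2.2 ^ 2 = (v.1 + v.2.1) * v.2.2.1) with hGhdef
  set U : Finset F := univ.filter (fun a : F => a ≠ 0) with hUdef
  set Wf : Finset (F × F) := univ.filter (fun w : F × F => w.2 ^ 2 = w.1 ^ 3 - w.1) with hWfdef
  set W' : Finset (F × F) := Wf.filter
    (fun w : F × F => w.1 ≠ 0 ∧ w.1 ≠ 1 ∧ w.1 ≠ -1 ∧ w.1 ≠ i ∧ w.1 ≠ -i) with hW'def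
  -- Step A : Gh.card = 4 * G.card
  have hmap : ∀ v ∈ Gh, (v.1, v.2.1) ∈ G := by
    intro v hv
    simp only [hGhdef, hGdef, mem_filter, mem_univ, true_and] at hv ⊢
    exact ⟨hv.1, v.2.2.1, v.2.2.2, hv.2.1, hv.2.2⟩
  have hfib : ∀ p ∈ G, (Gh.filter (fun v => (v.1, v.2.1) = p)).card = 4 := by
    rintro ⟨pa, pb⟩ hp
    simp only [hGdef, mem_filter, mem_univ, true_and] at hp
    obtain ⟨⟨ha, hb, hab, hab'⟩, d0, e0, hd0, he0⟩ := hp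
    have hd0' : d0 ≠ 0 := by
      intro h; have h3 := mul_ne_zero ha hb; rw [← hd0, h] at h3; norm_num at h3
    have he0' : e0 ≠ 0 := by
      intro h; rw [h] at he0; norm_num at he0
      rcases he0 with h' | h'
      · exact hab h'
      · exact hd0' h'
    have hset : Gh.filter (fun v => (v.1, v.2.1) = (pa, pb)) =
        {(pa, pb, d0, e0), (pa, pb, d0, -e0), (pa, pb, -d0, i * e0), (pa, pb, -d0, -(i * e0))} := by
      ext ⟨v1, v2, vd, ve⟩
      simp only [hGhdef, mem_filter, mem_univ, true_and, mem_insert, mem_singleton,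
        Prod.mk.injEq]
      constructor
      · rintro ⟨⟨hnt, hdv, hev⟩, hv1, hv2⟩
        subst hv1; subst hv2
        have hdd : (vd - d0) * (vd + d0) = 0 := by linear_combination hdv - hd0
        rcases mul_eq_zero.mp hdd with h | h
        · have hvd : vd = d0 := by linear_combination h
          rw [hvd] at hev
          have h2e : 2 * ((ve - e0) * (ve + e0)) = 0 := by linear_combination hev - he0
          have hee := (mul_eq_zero.mp h2e).resolve_left h2
          rcases mul_eq_zero.mp hee with h' | h'
          · exact Or.inl ⟨rfl, rfl, hvd, by linear_combination h'⟩
          · exact Or.inr (Or.inl ⟨rfl, rfl, hvd, by linear_combination h'⟩)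
        · have hvd : vd = -d0 := by linear_combination h
          rw [hvd] at hev
          have h2e : 2 * ((ve - i * e0) * (ve + i * e0)) = 0 := by
            linear_combination hev + he0 - 2 * e0 ^ 2 * hii
          have hee := (mul_eq_zero.mp h2e).resolve_left h2
          rcases mul_eq_zero.mp hee with h' | h'
          · exact Or.inr (Or.inr (Or.inl ⟨rfl, rfl, hvd, by linear_combination h'⟩))
          · exact Or.inr (Or.inr (Or.inr ⟨rfl, rfl, hvd, by linear_combination h'⟩))
      · rintro (⟨rfl, rfl, rfl, rfl⟩ | ⟨rfl, rfl, rfl, rfl⟩ | ⟨rfl, rfl, rfl, rfl⟩ |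
          ⟨rfl, rfl, rfl, rfl⟩)
        · exact ⟨⟨⟨ha, hb, hab, hab'⟩, hd0, he0⟩, rfl, rfl⟩
        · exact ⟨⟨⟨ha, hb, hab, hab'⟩, hd0, by linear_combination he0⟩, rfl, rfl⟩
        · exact ⟨⟨⟨ha, hb, hab, hab'⟩, by linear_combination hd0,
            by linear_combination 2 * e0 ^ 2 * hii - he0⟩, rfl, rfl⟩
        · exact ⟨⟨⟨ha, hb, hab, hab'⟩, by linear_combination hd0,
            by linear_combination 2 * e0 ^ 2 * hii - he0⟩, rfl, rfl⟩
    rw [hset]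
    have hne1 : e0 ≠ -e0 := fun h => he0'
      ((mul_eq_zero.mp (show (2 : F) * e0 = 0 by linear_combination h)).resolve_left h2)
    have hnd : d0 ≠ -d0 := fun h => hd0'
      ((mul_eq_zero.mp (show (2 : F) * d0 = 0 by linear_combination h)).resolve_left h2)
    have hie0 : i * e0 ≠ 0 := mul_ne_zero hi0 he0'
    have hne2 : i * e0 ≠ -(i * e0) := fun h => hie0
      ((mul_eq_zero.mp (show (2 : F) * (i * e0) = 0 by linear_combination h)).resolve_left h2)
    have n1 : (pa, pb, d0, e0) ∉ ({(pa, pb, d0, -e0), (pa, pb, -d0, i * e0),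
        (pa, pb, -d0, -(i * e0))} : Finset (F × F × F × F)) := by
      intro h
      simp only [mem_insert, mem_singleton, Prod.mk.injEq] at h
      rcases h with ⟨_, _, _, h4⟩ | ⟨_, _, h3, _⟩ | ⟨_, _, h3, _⟩
      exacts [hne1 h4, hnd h3, hnd h3]
    have n2 : (pa, pb, d0, -e0) ∉ ({(pa, pb, -d0, i * e0),
        (pa, pb, -d0, -(i * e0))} : Finset (F × F × F × F)) := by
      intro h
      simp only [mem_insert, mem_singleton, Prod.mk.injEq] at h
      rcases h with ⟨_, _, h3, _⟩ | ⟨_, _, h3, _⟩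
      exacts [hnd h3, hnd h3]
    have n3 : (pa, pb, -d0, i * e0) ∉ ({(pa, pb, -d0, -(i * e0))} : Finset (F × F × F × F)) := by
      intro h
      simp only [mem_singleton, Prod.mk.injEq] at h
      exact hne2 h.2.2.2
    rw [card_insert_of_notMem n1, card_insert_of_notMem n2, card_insert_of_notMem n3,
      card_singleton]
  have hA : Gh.card = 4 * G.card := by
    calc Gh.card = ∑ p ∈ G, (Gh.filter fun v => (v.1, v.2.1) = p).card :=
        card_eq_sum_card_fiberwise hmap
      _ = ∑ _p ∈ G, 4 := Finset.sum_congr rfl hfib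
      _ = 4 * G.card := by rw [Finset.sum_const, smul_eq_mul, mul_comm]
  -- Step B : Gh.card = (U ×ˢ W').card
  have hB : Gh.card = (U ×ˢ W').card := by
    apply Finset.card_nbij'
      (fun v : F × F × F × F => (v.1, ((-i) * v.2.2.1 * v.1⁻¹, s * v.2.2.2 * v.1⁻¹)))
      (fun w : F × (F × F) => (w.1, -w.1 * w.2.1 ^ 2, w.1 * i * w.2.1, w.1 * w.2.2 * s⁻¹))
    · rintro ⟨a, b, d, e⟩ hv
      change (a, b, d, e) ∈ Gh at hv
      simp only [hGhdef, mem_filter, mem_univ, true_and] at hv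
      obtain ⟨⟨ha, hb, hab, hab'⟩, hd, he⟩ := hv
      have hd0 : d ≠ 0 := by
        intro h; have h3 := mul_ne_zero ha hb; rw [← hd, h] at h3; norm_num at h3
      have he0 : e ≠ 0 := by
        intro h; rw [h] at he; norm_num at he
        rcases he with h' | h'
        · exact hab h'
        · exact hd0 h'
      have hkey : s ^ 2 * e ^ 2 * a = i * d ^ 3 + i * d * a ^ 2 := by
        linear_combination (e ^ 2 * a) * hs2 + (i * a) * he + (-(i * d)) * hd
      change (a, -i * d * a⁻¹, s * e * a⁻¹) ∈ U ×ˢ W'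
      simp only [mem_product, hUdef, hW'def, hWfdef, mem_filter, mem_univ, true_and]
      refine ⟨ha, ⟨?_, ?_, ?_, ?_, ?_, ?_⟩⟩
      · field_simp
        linear_combination hkey + i * d ^ 3 * hii
      · exact mul_ne_zero (mul_ne_zero (neg_ne_zero.mpr hi0) hd0) (inv_ne_zero ha)
      · intro hx
        field_simp at hx
        have h0 : a * (a + b) = 0 := by linear_combination -hd - (a - i*d) * hx + d^2 * hii
        rcases mul_eq_zero.mp h0 with h' | h'
        · exact ha h'
        · exact hab h'
      · intro hx
        field_simp at hx
        have h0 : a * (a + b) = 0 := by linear_combination -hd + (a + i*d) * hx + d^2 * hii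
        rcases mul_eq_zero.mp h0 with h' | h'
        · exact ha h'
        · exact hab h'
      · intro hx
        field_simp at hx
        have h0 : a * (a - b) = 0 := by linear_combination hd - (a - d) * hx
        rcases mul_eq_zero.mp h0 with h' | h'
        · exact ha h'
        · exact hab' h'
      · intro hx
        field_simp at hx
        have h0 : a * (a - b) = 0 := by linear_combination hd + (a + d) * hx
        rcases mul_eq_zero.mp h0 with h' | h'
        · exact ha h'
        · exact hab' h'
    · rintro ⟨a, x, y⟩ hw
      change (a, x, y) ∈ U ×ˢ W' at hw
      simp only [mem_product, hUdef, hW'def, hWfdef, mem_filter, mem_univ, true_and] at hw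
      obtain ⟨ha, ⟨hy, hx0, hx1, hxm1, hxi, hxmi⟩⟩ := hw
      change (a, -a * x ^ 2, a * i * x, a * y * s⁻¹) ∈ Gh
      simp only [hGhdef, mem_filter, mem_univ, true_and]
      have h1mx : (1 : F) - x ^ 2 ≠ 0 := by
        intro h
        rcases mul_eq_zero.mp (show (1 - x) * (1 + x) = 0 by linear_combination h) with h' | h'
        · exact hx1 (by linear_combination -h')
        · exact hxm1 (by linear_combination h')
      have h1px : (1 : F) + x ^ 2 ≠ 0 := by
        intro h
        rcases mul_eq_zero.mp (show (x - i) * (x + i) = 0 by linear_combination h - hii) with h' | h'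
        · exact hxi (by linear_combination h')
        · exact hxmi (by linear_combination h')
      refine ⟨⟨ha, ?_, ?_, ?_⟩, ?_, ?_⟩
      · show -a * x ^ 2 ≠ 0
        exact mul_ne_zero (neg_ne_zero.mpr ha) (pow_ne_zero _ hx0)
      · show a + -a * x ^ 2 ≠ 0
        intro h
        exact absurd (show a * (1 - x ^ 2) = 0 by linear_combination h) (mul_ne_zero ha h1mx)
      · show a - -a * x ^ 2 ≠ 0
        intro h
        exact absurd (show a * (1 + x ^ 2) = 0 by linear_combination h) (mul_ne_zero ha h1px)
      · show (a * i * x) ^ 2 = a * (-a * x ^ 2)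
        linear_combination a ^ 2 * x ^ 2 * hii
      · show 2 * (a * y * s⁻¹) ^ 2 = (a + -a * x ^ 2) * (a * i * x)
        field_simp
        linear_combination 2*hy + i*(x^3-x)*hs2 + 2*(x^3-x)*hii
    · rintro ⟨a, b, d, e⟩ hv
      change (a, b, d, e) ∈ Gh at hv
      simp only [hGhdef, mem_filter, mem_univ, true_and] at hv
      obtain ⟨⟨ha, hb, hab, hab'⟩, hd, he⟩ := hv
      simp only [Prod.mk.injEq]
      refine ⟨trivial, ?_, ?_, ?_⟩
      · field_simp
        linear_combination hd - d ^ 2 * hii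
      · field_simp
        linear_combination (-d) * hii
      · field_simp
    · rintro ⟨a, x, y⟩ hw
      change (a, x, y) ∈ U ×ˢ W' at hw
      simp only [mem_product, hUdef, mem_filter, mem_univ, true_and] at hw
      obtain ⟨ha, -⟩ := hw
      simp only [Prod.mk.injEq]
      refine ⟨trivial, ?_, ?_⟩
      · field_simp
        linear_combination (-x) * hii
      · field_simp
  -- Step C : the seven special points
  have hIs : i * s ≠ 0 := mul_ne_zero hi0 hs0
  have h0m1 : (0 : F) ≠ -1 := fun h => one_ne_zero (α := F) (by linear_combination h)
  have h1m1 : (1 : F) ≠ -1 := fun h => h2 (by linear_combination h)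
  have hi1 : i ≠ 1 := by intro h; apply h2; rw [h] at hii; linear_combination hii
  have him1 : i ≠ -1 := by intro h; apply h2; rw [h] at hii; linear_combination hii
  have hinegi : i ≠ -i := fun h => (mul_ne_zero h2 hi0) (by linear_combination h)
  have hmi0 : -i ≠ 0 := neg_ne_zero.mpr hi0
  have hmi1 : -i ≠ 1 := fun h => him1 (by linear_combination -h)
  have hmim1 : -i ≠ -1 := fun h => hi1 (by linear_combination -h)
  have hss : s ≠ -s := fun h => hs0
    ((mul_eq_zero.mp (show (2 : F) * s = 0 by linear_combination h)).resolve_left h2)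
  have hisis : i * s ≠ -(i * s) := fun h => hIs
    ((mul_eq_zero.mp (show (2 : F) * (i * s) = 0 by linear_combination h)).resolve_left h2)
  have hsplit := Finset.card_filter_add_card_filter_not
    (s := Wf) (p := fun w : F × F => w.1 ≠ 0 ∧ w.1 ≠ 1 ∧ w.1 ≠ -1 ∧ w.1 ≠ i ∧ w.1 ≠ -i)
  have hExt : Wf.filter (fun w : F × F => ¬(w.1 ≠ 0 ∧ w.1 ≠ 1 ∧ w.1 ≠ -1 ∧ w.1 ≠ i ∧ w.1 ≠ -i)) =
      ({((0 : F), (0 : F)), (1, 0), (-1, 0), (i, i * s), (i, -(i * s)), (-i, s), (-i, -s)} :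
        Finset (F × F)) := by
    ext ⟨x, y⟩
    constructor
    · intro hw
      rw [mem_filter] at hw
      obtain ⟨hwf, hbad⟩ := hw
      rw [hWfdef, mem_filter] at hwf
      have hxy : y ^ 2 = x ^ 3 - x := hwf.2
      have hx : x = 0 ∨ x = 1 ∨ x = -1 ∨ x = i ∨ x = -i := by
        by_contra hc
        push_neg at hc
        exact hbad ⟨hc.1, hc.2.1, hc.2.2.1, hc.2.2.2.1, hc.2.2.2.2⟩
      simp only [mem_insert, mem_singleton, Prod.mk.injEq]
      rcases hx with rfl | rfl | rfl | hxe | hxe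
      · have hy2 : y ^ 2 = 0 := by linear_combination hxy
        exact Or.inl ⟨rfl, pow_eq_zero_iff (two_ne_zero) |>.mp hy2⟩
      · have hy2 : y ^ 2 = 0 := by linear_combination hxy
        exact Or.inr (Or.inl ⟨rfl, pow_eq_zero_iff (two_ne_zero) |>.mp hy2⟩)
      · have hy2 : y ^ 2 = 0 := by linear_combination hxy
        exact Or.inr (Or.inr (Or.inl ⟨rfl, pow_eq_zero_iff (two_ne_zero) |>.mp hy2⟩))
      · rw [hxe] at hxy
        have h4 : (y - i * s) * (y + i * s) = 0 := by
          linear_combination hxy - i * hii - i ^ 2 * hs2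
        rcases mul_eq_zero.mp h4 with h' | h'
        · exact Or.inr (Or.inr (Or.inr (Or.inl ⟨hxe, by linear_combination h'⟩)))
        · exact Or.inr (Or.inr (Or.inr (Or.inr (Or.inl ⟨hxe, by linear_combination h'⟩))))
      · rw [hxe] at hxy
        have h4 : (y - s) * (y + s) = 0 := by
          linear_combination hxy - i * hii - hs2
        rcases mul_eq_zero.mp h4 with h' | h'
        · exact Or.inr (Or.inr (Or.inr (Or.inr (Or.inr (Or.inl ⟨hxe, by linear_combination h'⟩)))))
        · exact Or.inr (Or.inr (Or.inr (Or.inr (Or.inr (Or.inr ⟨hxe, by linear_combination h'⟩)))))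
    · intro hw
      simp only [mem_insert, mem_singleton, Prod.mk.injEq] at hw
      rw [mem_filter, hWfdef, mem_filter]
      rcases hw with ⟨rfl, rfl⟩ | ⟨rfl, rfl⟩ | ⟨rfl, rfl⟩ | ⟨hx', hy'⟩ | ⟨hx', hy'⟩ |
        ⟨hx', hy'⟩ | ⟨hx', hy'⟩
      · exact ⟨⟨mem_univ _, by norm_num⟩, fun hbad => hbad.1 rfl⟩
      · exact ⟨⟨mem_univ _, by norm_num⟩, fun hbad => hbad.2.1 rfl⟩
      · exact ⟨⟨mem_univ _, by norm_num⟩, fun hbad => hbad.2.2.1 rfl⟩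
      · exact ⟨⟨mem_univ _, by rw [hx', hy']; linear_combination i ^ 2 * hs2 + i * hii⟩,
          fun hbad => hbad.2.2.2.1 hx'⟩
      · exact ⟨⟨mem_univ _, by rw [hx', hy']; linear_combination i ^ 2 * hs2 + i * hii⟩,
          fun hbad => hbad.2.2.2.1 hx'⟩
      · exact ⟨⟨mem_univ _, by rw [hx', hy']; linear_combination hs2 + i * hii⟩,
          fun hbad => hbad.2.2.2.2 hx'⟩
      · exact ⟨⟨mem_univ _, by rw [hx', hy']; linear_combination hs2 + i * hii⟩,
          fun hbad => hbad.2.2.2.2 hx'⟩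
  have nA : ((0 : F), (0 : F)) ∉ ({((1 : F), (0 : F)), (-1, 0), (i, i * s), (i, -(i * s)),
      (-i, s), (-i, -s)} : Finset (F × F)) := by
    intro h
    simp only [mem_insert, mem_singleton, Prod.mk.injEq] at h
    rcases h with ⟨h1, -⟩ | ⟨h1, -⟩ | ⟨h1, -⟩ | ⟨h1, -⟩ | ⟨h1, -⟩ | ⟨h1, -⟩
    exacts [zero_ne_one h1, h0m1 h1, hi0 h1.symm, hi0 h1.symm, hmi0 h1.symm, hmi0 h1.symm]
  have nB : ((1 : F), (0 : F)) ∉ ({((-1 : F), (0 : F)), (i, i * s), (i, -(i * s)),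
      (-i, s), (-i, -s)} : Finset (F × F)) := by
    intro h
    simp only [mem_insert, mem_singleton, Prod.mk.injEq] at h
    rcases h with ⟨h1, -⟩ | ⟨h1, -⟩ | ⟨h1, -⟩ | ⟨h1, -⟩ | ⟨h1, -⟩
    exacts [h1m1 h1, hi1 h1.symm, hi1 h1.symm, hmi1 h1.symm, hmi1 h1.symm]
  have nC : ((-1 : F), (0 : F)) ∉ ({(i, i * s), (i, -(i * s)),
      (-i, s), (-i, -s)} : Finset (F × F)) := by
    intro h
    simp only [mem_insert, mem_singleton, Prod.mk.injEq] at h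
    rcases h with ⟨h1, -⟩ | ⟨h1, -⟩ | ⟨h1, -⟩ | ⟨h1, -⟩
    exacts [him1 h1.symm, him1 h1.symm, hmim1 h1.symm, hmim1 h1.symm]
  have nD : (i, i * s) ∉ ({(i, -(i * s)), (-i, s), (-i, -s)} : Finset (F × F)) := by
    intro h
    simp only [mem_insert, mem_singleton, Prod.mk.injEq] at h
    rcases h with ⟨-, h1⟩ | ⟨h1, -⟩ | ⟨h1, -⟩
    exacts [hisis h1, hinegi h1, hinegi h1]
  have nE : (i, -(i * s)) ∉ ({(-i, s), (-i, -s)} : Finset (F × F)) := by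
    intro h
    simp only [mem_insert, mem_singleton, Prod.mk.injEq] at h
    rcases h with ⟨h1, -⟩ | ⟨h1, -⟩
    exacts [hinegi h1, hinegi h1]
  have nF : (-i, s) ∉ ({(-i, -s)} : Finset (F × F)) := by
    intro h
    simp only [mem_singleton, Prod.mk.injEq] at h
    exact hss h.2
  have h7 : (Wf.filter (fun w : F × F =>
      ¬(w.1 ≠ 0 ∧ w.1 ≠ 1 ∧ w.1 ≠ -1 ∧ w.1 ≠ i ∧ w.1 ≠ -i))).card = 7 := by
    rw [hExt, card_insert_of_notMem nA, card_insert_of_notMem nB, card_insert_of_notMem nC,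
      card_insert_of_notMem nD, card_insert_of_notMem nE, card_insert_of_notMem nF,
      card_singleton]
  have hC : W'.card + 7 = Wf.card := by
    rw [hW'def]
    rw [← h7]
    exact hsplit
  -- Step D : U.card
  have hU : U.card = Fintype.card F - 1 := by
    have hUe : U = univ.erase (0 : F) := by
      ext a
      rw [hUdef]
      simp [Finset.mem_erase]
    rw [hUe, card_erase_of_mem (mem_univ _), card_univ]
  -- Conversions to Nat.card
  have hGN : Nat.card {p : F × F // Good p} = G.card := by
    rw [Nat.card_eq_fintype_card, Fintype.card_subtype, hGdef]
  have hWN : Nat.card {w : F × F // w.2 ^ 2 = w.1 ^ 3 - w.1} = Wf.card := by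
    rw [Nat.card_eq_fintype_card, Fintype.card_subtype, hWfdef]
  rw [hGN, hWN, ← hU, ← hC, ← hA, hB, card_product]
  ring


end Count


theorem stmt9 {F : Type*} [Field F] [Fintype F] (q : ℕ)
    (hq : Fintype.card F = q) (h5 : q % 8 = 5) :
    4 * Nat.card {p : F × F // AGM.AdvInf p} + 7 * (q - 1) =
      (q - 1) * Nat.card {p : F × F // p.2 ^ 2 = p.1 ^ 3 - p.1} := by
  classical
  subst hq
  have hchar : ringChar F ≠ 2 := by
    intro h
    have := FiniteField.even_card_of_char_two (F := F) h
    omega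
  have h2 : (2 : F) ≠ 0 := Ring.two_ne_zero hchar
  obtain ⟨i, hi⟩ : IsSquare (-1 : F) := by
    rw [FiniteField.isSquare_neg_one_iff]; omega
  have hii : i ^ 2 = -1 := by rw [sq]; exact hi.symm
  have hi0 : i ≠ 0 := by intro h; rw [h] at hii; norm_num at hii
  have h2ns : ¬ IsSquare (2 : F) := by
    rw [FiniteField.isSquare_two_iff]
    omega
  have hins : ¬ IsSquare i := by
    rintro ⟨j, hj⟩
    have hj0 : j ≠ 0 := by rintro rfl; rw [mul_zero] at hj; exact hi0 hj
    have hj2 : j ^ 2 = i := by rw [sq]; exact hj.symm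
    have hj8 : j ^ 8 = 1 := by
      calc j ^ 8 = ((j ^ 2) ^ 2) ^ 2 := by ring
        _ = 1 := by rw [hj2, hii]; norm_num
    have hj4 : j ^ 4 = -1 := by
      calc j ^ 4 = (j ^ 2) ^ 2 := by ring
        _ = -1 := by rw [hj2, hii]
    set u : Fˣ := Units.mk0 j hj0 with hu
    have hu8 : u ^ 8 = 1 := by ext; push_cast [hu]; exact hj8
    have hu4 : u ^ 4 ≠ 1 := by
      intro h
      have h' : ((u ^ 4 : Fˣ) : F) = 1 := by rw [h]; rfl
      simp only [hu, Units.val_pow_eq_pow_val, Units.val_mk0] at h'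
      rw [hj4] at h'
      exact Ring.neg_one_ne_one_of_char_ne_two hchar h'
    have hdvd : orderOf u ∣ 8 := orderOf_dvd_of_pow_eq_one hu8
    have hndvd : ¬ orderOf u ∣ 4 := fun h => hu4 (orderOf_dvd_iff_pow_eq_one.mp h)
    have ho8 : orderOf u = 8 := by
      rcases (Nat.dvd_prime_pow Nat.prime_two (m := 3)).mp (by simpa using hdvd) with ⟨k, hk, hok⟩
      interval_cases k
      · exfalso; apply hndvd; rw [hok]; norm_num
      · exfalso; apply hndvd; rw [hok]; norm_num
      · exfalso; apply hndvd; rw [hok]; norm_num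
      · rw [hok]; norm_num
    have := orderOf_dvd_card (x := u)
    rw [ho8, Fintype.card_units] at this
    omega
  obtain ⟨s, hs⟩ : IsSquare (2 * i) := nonsq_mul h2 hi0 h2ns hins
  have hs2 : s ^ 2 = 2 * i := by rw [sq]; exact hs.symm
  have hgood : Nat.card {p : F × F // AGM.AdvInf p} = Nat.card {p : F × F // Good p} :=
    Nat.card_congr (Equiv.subtypeEquivRight (fun p => advInf_iff_good h2 hii hins p))
  rw [hgood]
  exact main_count h2 hii hs2
end

section
/- Let F be a finite field with q elements where q ≡ 5 (mod 8). Then S_F^{adv_∞} is empty if and only if q = 5 or q = 13. -/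
namespace AGMStmt10

open AGM

variable {K : Type*} [Field K]

lemma zmod13_no_two_chain : ∀ x y z : ZMod 13,
    ¬ (((x ≠ 0 ∧ x ≠ 1 ∧ x ≠ -1) ∧ (y ≠ 0 ∧ y ≠ 1 ∧ y ≠ -1) ∧
        (1 + x) ^ 2 * y ^ 2 = 4 * x) ∧
      ((y ≠ 0 ∧ y ≠ 1 ∧ y ≠ -1) ∧ (z ≠ 0 ∧ z ≠ 1 ∧ z ≠ -1) ∧
        (1 + y) ^ 2 * z ^ 2 = 4 * y)) := by decide

lemma tk_div {a b : K} (h : Nontriv (a, b)) : Tk (b / a) := by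
  obtain ⟨ha, hb, hab, hab'⟩ := h
  refine ⟨div_ne_zero hb ha, ?_, ?_⟩
  · intro h1
    have hba : b = a := by field_simp at h1; exact h1
    exact hab' (by rw [hba, sub_self])
  · intro h1
    have hba : b = -a := by field_simp at h1; linear_combination h1
    exact hab (by rw [hba]; ring)

/-- Node chains give k-chains. -/
lemma advN_imp_tadvN : ∀ (n : ℕ) (a b : K), AdvN n (a, b) → TAdvN n (b / a) := by
  intro n
  induction n with
  | zero => intro a b h; exact tk_div h
  | succ n ih =>
    intro a b h
    obtain ⟨qq, ⟨hp, hqn, h2c, hd2⟩, hrest⟩ := h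
    obtain ⟨ha, hb, hab, hab'⟩ := hp
    obtain ⟨hc, hd, hcd, hcd'⟩ := hqn
    refine ⟨qq.2 / qq.1, ⟨tk_div ⟨ha, hb, hab, hab'⟩, tk_div ⟨hc, hd, hcd, hcd'⟩, ?_⟩, ?_⟩
    · have key : (a + b) ^ 2 * qq.2 ^ 2 = 4 * (a * b) * qq.1 ^ 2 := by
        rw [hd2, ← h2c]; ring
      have e1 : (1 : K) + b / a = (a + b) / a := by field_simp
      rw [e1, div_pow, div_pow, div_mul_div_comm, key]
      field_simp
    · have := ih qq.1 qq.2 hrest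
      exact this

lemma nontriv_pair {a k : K} (ha : a ≠ 0) (hk : Tk k) : Nontriv (a, a * k) := by
  obtain ⟨hk0, hk1, hkm⟩ := hk
  refine ⟨ha, mul_ne_zero ha hk0, ?_, ?_⟩
  · intro h
    have h1k : a * (1 + k) = 0 := by linear_combination h
    rcases mul_eq_zero.mp h1k with h' | h'
    · exact ha h'
    · exact hkm (by linear_combination h')
  · intro h
    have h1k : a * (1 - k) = 0 := by linear_combination h
    rcases mul_eq_zero.mp h1k with h' | h'
    · exact ha h'
    · exact hk1 (by linear_combination -h')

/-- k-chains lift to node chains. -/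
lemma tadvN_imp_advN (h2 : (2 : K) ≠ 0) :
    ∀ (n : ℕ) (a k : K), a ≠ 0 → TAdvN n k → AdvN n (a, a * k) := by
  intro n
  induction n with
  | zero => intro a k ha h; exact nontriv_pair ha h
  | succ n ih =>
    intro a k ha h
    obtain ⟨k₂, ⟨hTk, hTk₂, heq⟩, hrest⟩ := h
    obtain ⟨hk0, hk1, hkm⟩ := hTk
    have h1k : (1 : K) + k ≠ 0 := by
      intro h'; exact hkm (by linear_combination h')
    have hc : a * (1 + k) / 2 ≠ 0 := div_ne_zero (mul_ne_zero ha h1k) h2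
    refine ⟨(a * (1 + k) / 2, a * (1 + k) / 2 * k₂),
      ⟨nontriv_pair ha ⟨hk0, hk1, hkm⟩, nontriv_pair hc hTk₂, ?_, ?_⟩, ?_⟩
    · show 2 * (a * (1 + k) / 2) = a + a * k
      field_simp
    · show (a * (1 + k) / 2 * k₂) ^ 2 = a * (a * k)
      field_simp
      linear_combination heq
    · exact ih _ k₂ hc hrest

/-- The squared Möbius parametrization. -/
noncomputable def kk (w : K) : K := ((w - 1) / (w + 1)) ^ 2

lemma ne_of_pow4 {w : K} (hw4 : w ^ 4 ≠ 1) :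
    w + 1 ≠ 0 ∧ w - 1 ≠ 0 ∧ w ^ 2 + 1 ≠ 0 ∧ w ^ 2 - 1 ≠ 0 := by
  refine ⟨?_, ?_, ?_, ?_⟩ <;> intro h <;> apply hw4
  · have hw : w = -1 := by linear_combination h
    rw [hw]; norm_num
  · have hw : w = 1 := by linear_combination h
    rw [hw]; norm_num
  · have hw : w ^ 2 = -1 := by linear_combination h
    rw [show w ^ 4 = (w ^ 2) ^ 2 by ring, hw]; norm_num
  · have hw : w ^ 2 = 1 := by linear_combination h
    rw [show w ^ 4 = (w ^ 2) ^ 2 by ring, hw]; norm_num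

lemma tk_kk (h2 : (2 : K) ≠ 0) {w : K} (hw0 : w ≠ 0) (hw4 : w ^ 4 ≠ 1) : Tk (kk w) := by
  obtain ⟨hp1, hm1, hp2, hm2⟩ := ne_of_pow4 hw4
  have h4 : (4 : K) ≠ 0 := by
    have := mul_ne_zero h2 h2
    intro h; apply this; linear_combination h
  unfold kk
  refine ⟨pow_ne_zero 2 (div_ne_zero hm1 hp1), ?_, ?_⟩
  · intro h
    rw [div_pow, div_eq_iff (pow_ne_zero 2 hp1), one_mul] at h
    have h'' : (4 : K) * w = 0 := by linear_combination -h
    rcases mul_eq_zero.mp h'' with h3 | h3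
    · exact h4 h3
    · exact hw0 h3
  · intro h
    rw [div_pow, div_eq_iff (pow_ne_zero 2 hp1)] at h
    have h'' : (2 : K) * (w ^ 2 + 1) = 0 := by linear_combination h
    rcases mul_eq_zero.mp h'' with h3 | h3
    · exact h2 h3
    · exact hp2 h3

lemma kk_inv {w : K} (hw0 : w ≠ 0) (hw4 : w ^ 4 ≠ 1) : kk w⁻¹ = kk w := by
  obtain ⟨hp1, hm1, _, _⟩ := ne_of_pow4 hw4
  unfold kk
  have h1p : (1 : K) + w ≠ 0 := by intro hh; exact hp1 (by linear_combination hh)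
  have hden : w⁻¹ + 1 ≠ 0 := by
    have h1 : w⁻¹ + 1 = (1 + w) / w := by field_simp
    rw [h1]
    exact div_ne_zero h1p hw0
  have key : (w⁻¹ - 1) / (w⁻¹ + 1) = (1 - w) / (1 + w) := by
    rw [div_eq_div_iff hden h1p]
    field_simp
  rw [key, show (1 - w) / (1 + w) = -((w - 1) / (w + 1)) by rw [add_comm 1 w, ← neg_div,
    neg_sub]]
  ring

/-- Core advancement step: from parameter `w` with `w⁴-1 = ρ²`, `ρ = r²`. -/
lemma core_step (h2 : (2 : K) ≠ 0) {w ρ r : K} (hw0 : w ≠ 0) (hw4 : w ^ 4 ≠ 1)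
    (hρ : w ^ 4 - 1 = ρ * ρ) (hr : ρ = r * r) :
    ∃ v : K, (v ≠ 0 ∧ v ^ 4 ≠ 1 ∧ IsSquare (v ^ 4 - 1)) ∧ kAdv (kk w) (kk v) := by
  obtain ⟨hp1, hm1, hp2, hm2⟩ := ne_of_pow4 hw4
  have hρ0 : ρ ≠ 0 := by rintro rfl; apply hw4; linear_combination hρ
  have hr0 : r ≠ 0 := by rintro rfl; apply hρ0; linear_combination hr
  have hvinv : (w ^ 2 + ρ) * (w ^ 2 - ρ) = 1 := by linear_combination hρ
  have hv0 : w ^ 2 + ρ ≠ 0 := left_ne_zero_of_mul_eq_one hvinv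
  have hveq : (w ^ 2 + ρ) ^ 2 = 2 * w ^ 2 * (w ^ 2 + ρ) - 1 := by linear_combination -hρ
  have hv4 : (w ^ 2 + ρ) ^ 4 - 1
      = (2 * r * w * (w ^ 2 + ρ)) * (2 * r * w * (w ^ 2 + ρ)) := by
    linear_combination (w ^ 4 + 1 - ρ * ρ) * hρ + (4 * w ^ 2 * (w ^ 2 + ρ) ^ 2) * hr
  have hs0 : 2 * r * w * (w ^ 2 + ρ) ≠ 0 :=
    mul_ne_zero (mul_ne_zero (mul_ne_zero h2 hr0) hw0) hv0
  have hv4ne : (w ^ 2 + ρ) ^ 4 ≠ 1 := by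
    intro h
    apply hs0
    have : (2 * r * w * (w ^ 2 + ρ)) * (2 * r * w * (w ^ 2 + ρ)) = 0 := by
      rw [← hv4, h, sub_self]
    exact mul_self_eq_zero.mp this
  obtain ⟨hvp1, hvm1, hvp2, hvm2⟩ := ne_of_pow4 hv4ne
  have hkv : kk (w ^ 2 + ρ) = (w ^ 2 - 1) / (w ^ 2 + 1) := by
    unfold kk
    rw [div_pow, div_eq_div_iff (pow_ne_zero 2 hvp1) hp2]
    linear_combination 2 * hveq
  refine ⟨w ^ 2 + ρ, ⟨hv0, hv4ne, ⟨_, hv4⟩⟩, tk_kk h2 hw0 hw4, tk_kk h2 hv0 hv4ne, ?_⟩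
  rw [hkv]
  unfold kk
  field_simp
  ring

lemma step_lemma (h2 : (2 : K) ≠ 0) (i : K) (hi2 : i ^ 2 = -1)
    (hnsi : ¬ IsSquare i)
    (hmul : ∀ a b : K, ¬ IsSquare a → ¬ IsSquare b → IsSquare (a * b))
    {w : K} (hw0 : w ≠ 0) (hw4 : w ^ 4 ≠ 1) (hwsq : IsSquare (w ^ 4 - 1)) :
    ∃ v : K, (v ≠ 0 ∧ v ^ 4 ≠ 1 ∧ IsSquare (v ^ 4 - 1)) ∧ kAdv (kk w) (kk v) := by
  obtain ⟨ρ, hρ⟩ := hwsq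
  have hρ0 : ρ ≠ 0 := by rintro rfl; apply hw4; linear_combination hρ
  by_cases hρs : IsSquare ρ
  · obtain ⟨r, hr⟩ := hρs
    exact core_step h2 hw0 hw4 hρ hr
  · have hiρ : IsSquare (i * ρ) := hmul i ρ hnsi hρs
    obtain ⟨r, hr⟩ := hiρ
    have hw20 : (w : K) ^ 2 ≠ 0 := pow_ne_zero 2 hw0
    have hwi0 : w⁻¹ ≠ 0 := inv_ne_zero hw0
    have hwi4 : (w⁻¹) ^ 4 ≠ 1 := by
      intro h
      apply hw4
      have : (w ^ 4)⁻¹ = 1 := by rw [← inv_pow]; exact h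
      rw [← inv_inv (w ^ 4), this, inv_one]
    have hρ' : (w⁻¹) ^ 4 - 1 = (i * ρ / w ^ 2) * (i * ρ / w ^ 2) := by
      field_simp
      linear_combination -hρ - ρ ^ 2 * hi2  -- coefficients to fix
    have hr' : i * ρ / w ^ 2 = (r / w) * (r / w) := by
      rw [div_mul_div_comm, ← hr]; ring
    obtain ⟨v, hv, hadv⟩ := core_step h2 hwi0 hwi4 hρ' hr'
    rw [kk_inv hw0 hw4] at hadv
    exact ⟨v, hv, hadv⟩

/-- No indefinitely advanceable node over a field with 5 elements. -/
lemma not_advInf_card_five {F : Type*} [Field F] [Fintype F]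
    (hq : Fintype.card F = 5) (p : F × F) : ¬ AdvInf p := by
  intro h
  have h5cast : (5 : F) = 0 := by
    have := FiniteField.cast_card_eq_zero F
    rw [hq] at this
    exact_mod_cast this
  have h2 : (2 : F) ≠ 0 := by
    intro h'
    exact one_ne_zero (α := F) (by linear_combination h5cast - 2 * h')
  have hT : TAdvN 1 (p.2 / p.1) := advN_imp_tadvN 1 p.1 p.2 (h 1)
  obtain ⟨k₂, ⟨⟨hk0, hk1, hkm⟩, _, heq⟩, _⟩ := hT
  set k := p.2 / p.1 with hkdef
  have hk5 : k ^ 5 = k := by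
    have := FiniteField.pow_card k
    rwa [hq] at this
  have hk4 : k ^ 4 = 1 := by
    have hh : k ^ 4 * k = 1 * k := by
      rw [one_mul, ← pow_succ]
      exact hk5
    exact mul_right_cancel₀ hk0 hh
  have hfac : (k ^ 2 - 1) * (k ^ 2 + 1) = 0 := by linear_combination hk4
  rcases mul_eq_zero.mp hfac with hcase | hcase
  · have hfac2 : (k - 1) * (k + 1) = 0 := by linear_combination hcase
    rcases mul_eq_zero.mp hfac2 with h' | h'
    · exact hk1 (by linear_combination h')
    · exact hkm (by linear_combination h')
  · have hk2 : k ^ 2 = -1 := by linear_combination hcase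
    have hs : ((1 + k) * k₂) ^ 2 = 4 * k := by linear_combination heq
    have h4 : (4 : F) ≠ 0 := by
      intro hh
      exact (mul_ne_zero h2 h2) (by linear_combination hh)
    have hs0 : (1 + k) * k₂ ≠ 0 := by
      intro h'
      rw [h'] at hs
      have h4k : (4 : F) * k = 0 := by linear_combination -hs
      rcases mul_eq_zero.mp h4k with h'' | h''
      · exact h4 h''
      · exact hk0 h''
    have hs5 : ((1 + k) * k₂) ^ 5 = (1 + k) * k₂ := by
      have := FiniteField.pow_card ((1 + k) * k₂)
      rwa [hq] at this
    have hs4 : ((1 + k) * k₂) ^ 4 = 1 := by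
      have hh : ((1 + k) * k₂) ^ 4 * ((1 + k) * k₂) = 1 * ((1 + k) * k₂) := by
        rw [one_mul, ← pow_succ]
        exact hs5
      exact mul_right_cancel₀ hs0 hh
    have h16 : (16 : F) * k ^ 2 = 1 := by
      linear_combination (-(((1 + k) * k₂) ^ 2 + 4 * k)) * hs + hs4
    rw [hk2] at h16
    have h17 : (17 : F) = 0 := by linear_combination -h16
    exact h2 (by linear_combination h17 - 3 * h5cast)

/-- No indefinitely advanceable node over a field with 13 elements. -/
lemma not_advInf_card_13 {F : Type*} [Field F] [Fintype F]
    (hq : Fintype.card F = 13) (p : F × F) : ¬ AdvInf p := by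
  intro h
  have hT : TAdvN 2 (p.2 / p.1) := advN_imp_tadvN 2 p.1 p.2 (h 2)
  obtain ⟨k₁, hadv1, k₂, hadv2, -⟩ := hT
  haveI hfact : Fact (Nat.Prime 13) := ⟨by norm_num⟩
  obtain ⟨pc, hpc⟩ := CharP.exists F
  haveI := hpc
  obtain ⟨nn, hpp, hcard⟩ := FiniteField.card F pc
  rw [hq] at hcard
  have hpc13 : pc = 13 := by
    have hdvd : pc ∣ 13 := by
      rw [hcard]
      exact dvd_pow_self pc nn.ne_zero
    exact (Nat.prime_dvd_prime_iff_eq hpp (by norm_num)).mp hdvd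
  subst hpc13
  let f : ZMod 13 →+* F := ZMod.castHom dvd_rfl F
  have hinj : Function.Injective f := f.injective
  have hsurj : Function.Surjective f := by
    have hbij := (Fintype.bijective_iff_injective_and_card f).mpr
      ⟨hinj, by rw [ZMod.card, hq]⟩
    exact hbij.surjective
  obtain ⟨a, ha⟩ := hsurj (p.2 / p.1)
  obtain ⟨a₁, ha₁⟩ := hsurj k₁
  obtain ⟨a₂, ha₂⟩ := hsurj k₂
  rw [← ha, ← ha₁] at hadv1
  rw [← ha₁, ← ha₂] at hadv2
  have pull : ∀ x y : ZMod 13, kAdv (f x) (f y) → kAdv x y := by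
    rintro x y ⟨⟨t1, t2, t3⟩, ⟨u1, u2, u3⟩, heq⟩
    refine ⟨⟨?_, ?_, ?_⟩, ⟨?_, ?_, ?_⟩, ?_⟩
    · intro hh; exact t1 (by rw [hh, map_zero])
    · intro hh; exact t2 (by rw [hh, map_one])
    · intro hh; exact t3 (by rw [hh, map_neg, map_one])
    · intro hh; exact u1 (by rw [hh, map_zero])
    · intro hh; exact u2 (by rw [hh, map_one])
    · intro hh; exact u3 (by rw [hh, map_neg, map_one])
    · apply hinj
      rw [map_mul, map_pow, map_add, map_one, map_pow, map_mul, map_ofNat]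
      exact heq
  exact zmod13_no_two_chain a a₁ a₂ ⟨pull a a₁ hadv1, pull a₁ a₂ hadv2⟩

/-- Existence of an indefinitely advanceable node when `q ≡ 5 (mod 8)`, `q ∉ {5,13}`. -/
lemma exists_advInf {F : Type*} [Field F] [Fintype F] (q : ℕ)
    (hq : Fintype.card F = q) (h5 : q % 8 = 5) (hq5 : q ≠ 5) (hq13 : q ≠ 13) :
    ∃ p : F × F, AdvInf p := by
  obtain ⟨n, hqn, hodd, hn5⟩ : ∃ n : ℕ, q = 4 * n + 1 ∧ n % 2 = 1 ∧ 5 ≤ n :=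
    ⟨(q - 1) / 4, by omega, by omega, by omega⟩
  have hoddn : Odd n := Nat.odd_iff.mpr hodd
  -- all nonzero elements have order dividing 4n
  have hpow : ∀ y : F, y ≠ 0 → y ^ (4 * n) = 1 := by
    intro y hy
    have := FiniteField.pow_card_sub_one_eq_one y hy
    rwa [hq, hqn, Nat.add_sub_cancel] at this
  -- generator
  obtain ⟨g, hg⟩ := IsCyclic.exists_generator (α := Fˣ)
  have horder : orderOf g = 4 * n := by
    have h1 := orderOf_eq_card_of_forall_mem_zpowers hg
    rw [Nat.card_units, Nat.card_eq_fintype_card, hq, hqn, Nat.add_sub_cancel] at h1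
    exact h1
  have hgne : ∀ m : ℕ, 0 < m → m < 4 * n → ((g : Fˣ) : F) ^ m ≠ 1 := by
    intro m hm1 hm2 heqq
    have hu : (g ^ m : Fˣ) = 1 := by
      apply Units.ext
      rw [Units.val_pow_eq_pow_val, Units.val_one]
      exact heqq
    have hdvd := orderOf_dvd_iff_pow_eq_one.mpr hu
    rw [horder] at hdvd
    exact absurd (Nat.le_of_dvd hm1 hdvd) (by omega)
  have hg4n : ((g : Fˣ) : F) ^ (4 * n) = 1 := by
    rw [← Units.val_pow_eq_pow_val, ← horder, pow_orderOf_eq_one, Units.val_one]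
  -- square root of -1
  set i : F := ((g : Fˣ) : F) ^ n with hidef
  have hi4 : i ^ 4 = 1 := by
    rw [hidef, ← pow_mul, mul_comm]
    exact hg4n
  have hi2ne : i ^ 2 ≠ 1 := by
    rw [hidef, ← pow_mul]
    exact hgne (n * 2) (by omega) (by omega)
  have hi2 : i ^ 2 = -1 := by
    have hfac : (i ^ 2 - 1) * (i ^ 2 + 1) = 0 := by linear_combination hi4
    rcases mul_eq_zero.mp hfac with h' | h'
    · exact absurd (by linear_combination h') hi2ne
    · linear_combination h'
  have h2 : (2 : F) ≠ 0 := by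
    intro h'
    exact hi2ne (by rw [hi2]; linear_combination -h')
  have hi0 : i ≠ 0 := by
    intro h'
    have hz : (0 : F) ^ 2 = -1 := h' ▸ hi2
    exact one_ne_zero (α := F) (by linear_combination hz)
  -- square roots of n-th roots of unity
  have hx0 : ∀ x : F, x ^ n = 1 → x ≠ 0 := by
    intro x hx h'
    rw [h', zero_pow (by omega : n ≠ 0)] at hx
    exact zero_ne_one hx
  have hsqrtN : ∀ x : F, x ^ n = 1 → (x ^ (n / 2 + 1)) ^ 2 = x := by
    intro x hx
    calc (x ^ (n / 2 + 1)) ^ 2 = x ^ ((n / 2 + 1) * 2) := (pow_mul x _ 2).symm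
    _ = x ^ (n + 1) := by congr 1; omega
    _ = x ^ n * x := pow_succ x n
    _ = x := by rw [hx, one_mul]
  have hsqN : ∀ x : F, x ^ n = 1 → IsSquare x := by
    intro x hx
    exact ⟨x ^ (n / 2 + 1), by linear_combination -(hsqrtN x hx)⟩
  have hsqneg : IsSquare (-1 : F) := ⟨i, by linear_combination -hi2⟩
  -- squares have y^n = ±1
  have hsq_pm : ∀ y : F, y ≠ 0 → IsSquare y → (y ^ n = 1 ∨ y ^ n = -1) := by
    rintro y hy ⟨r, hr⟩
    have hr0 : r ≠ 0 := by
      rintro rfl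
      exact hy (by rw [hr, mul_zero])
    have h1 : (y ^ n) ^ 2 = 1 := by
      have hy2 : (y ^ 2) ^ n = 1 := by
        rw [show y ^ 2 = r ^ 4 by rw [hr]; ring, ← pow_mul]
        rw [show 4 * n = n * 4 by ring] at hpow ⊢
        exact hpow r hr0
      rw [pow_right_comm]
      exact hy2
    have hfac : (y ^ n - 1) * (y ^ n + 1) = 0 := by linear_combination h1
    rcases mul_eq_zero.mp hfac with h' | h'
    · exact Or.inl (by linear_combination h')
    · exact Or.inr (by linear_combination h')
  have hsq_of_pm : ∀ y : F, (y ^ n = 1 ∨ y ^ n = -1) → IsSquare y := by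
    rintro y (hy | hy)
    · exact hsqN y hy
    · have hny : (-y) ^ n = 1 := by
        rw [Odd.neg_pow hoddn, hy, neg_neg]
      have := hsqneg.mul (hsqN (-y) hny)
      rwa [show (-1 : F) * (-y) = y by ring] at this
  -- nonsquares have (y^n)² = -1
  have hnonsq : ∀ y : F, y ≠ 0 → ¬ IsSquare y → (y ^ n) ^ 2 = -1 := by
    intro y hy hns
    have h4 : ((y ^ n) ^ 2) ^ 2 = 1 := by
      have he : ((y ^ n) ^ 2) ^ 2 = y ^ (4 * n) := by
        rw [← pow_mul, ← pow_mul]; congr 1; ring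
      rw [he]; exact hpow y hy
    have hfac : ((y ^ n) ^ 2 - 1) * ((y ^ n) ^ 2 + 1) = 0 := by linear_combination h4
    rcases mul_eq_zero.mp hfac with h' | h'
    · exfalso
      have h1 : (y ^ n) ^ 2 = 1 := by linear_combination h'
      have hfac2 : (y ^ n - 1) * (y ^ n + 1) = 0 := by linear_combination h1
      apply hns
      apply hsq_of_pm
      rcases mul_eq_zero.mp hfac2 with h'' | h''
      · exact Or.inl (by linear_combination h'')
      · exact Or.inr (by linear_combination h'')
    · linear_combination h'
  -- product of nonsquares is a square
  have hmul : ∀ a b : F, ¬ IsSquare a → ¬ IsSquare b → IsSquare (a * b) := by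
    intro a b hna hnb
    have ha0 : a ≠ 0 := by rintro rfl; exact hna ⟨0, by ring⟩
    have hb0 : b ≠ 0 := by rintro rfl; exact hnb ⟨0, by ring⟩
    have h1 : ((a * b) ^ n) ^ 2 = 1 := by
      rw [mul_pow, mul_pow, hnonsq a ha0 hna, hnonsq b hb0 hnb]
      ring
    have hfac : ((a * b) ^ n - 1) * ((a * b) ^ n + 1) = 0 := by linear_combination h1
    apply hsq_of_pm
    rcases mul_eq_zero.mp hfac with h' | h'
    · exact Or.inl (by linear_combination h')
    · exact Or.inr (by linear_combination h')
  -- i is not a square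
  have hnsi : ¬ IsSquare i := by
    rintro ⟨j, hj⟩
    have hj0 : j ≠ 0 := by
      rintro rfl
      rw [mul_zero] at hj
      exact hi0 hj
    have hj4 : j ^ 4 = -1 := by
      rw [show j ^ 4 = (j * j) ^ 2 by ring, ← hj, hi2]
    have hthis : ((-1 : F)) ^ n = 1 := by
      rw [← hj4, ← pow_mul]
      exact hpow j hj0
    rw [Odd.neg_pow hoddn] at hthis
    exact h2 (by linear_combination -hthis)
  -- 2 is not a square
  have hns2 : ¬ IsSquare (2 : F) := by
    intro hsq
    have := (FiniteField.isSquare_two_iff (F := F)).mp hsq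
    exact this.2 (by rw [hq]; exact h5)
  -- x₀ : element of N of multiplicative order > 3
  have hcast : ∀ m : ℕ, (((g : Fˣ) : F) ^ 4) ^ m = ((g : Fˣ) : F) ^ (4 * m) := by
    intro m; rw [← pow_mul]
  have hx₀n : (((g : Fˣ) : F) ^ 4) ^ n = 1 := by rw [hcast]; exact hg4n
  have hx₀1 : ((g : Fˣ) : F) ^ 4 ≠ 1 := hgne 4 (by omega) (by omega)
  have hx₀2 : (((g : Fˣ) : F) ^ 4) ^ 2 ≠ 1 := by
    rw [hcast]; exact hgne 8 (by omega) (by omega)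
  have hx₀3 : (((g : Fˣ) : F) ^ 4) ^ 3 ≠ 1 := by
    rw [hcast]; exact hgne 12 (by omega) (by omega)
  -- existence of z in N \ {1} with z - 1 a square
  have hexz : ∃ z : F, z ^ n = 1 ∧ z ≠ 1 ∧ IsSquare (z - 1) := by
    by_contra hno
    push_neg at hno
    -- step (i): N \ {1} is mapped into itself by z ↦ -(1+z)
    have lemI : ∀ z : F, z ^ n = 1 → z ≠ 1 → ((-(1 + z)) ^ n = 1 ∧ -(1 + z) ≠ 1) := by
      intro z hzn hz1
      have hz0 : z ≠ 0 := hx0 z hzn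
      have hzm1 : z ≠ -1 := by
        intro h'
        rw [h'] at hzn
        rw [Odd.neg_pow hoddn, one_pow] at hzn
        exact h2 (by linear_combination -hzn)
      have hz2n : (z ^ 2) ^ n = 1 := by
        rw [pow_right_comm, hzn, one_pow]
      have hz21 : z ^ 2 ≠ 1 := by
        intro h'
        have hfac : (z - 1) * (z + 1) = 0 := by linear_combination h'
        rcases mul_eq_zero.mp hfac with h'' | h''
        · exact hz1 (by linear_combination h'')
        · exact hzm1 (by linear_combination h'')
      have hA := hno z hzn hz1
      have hB := hno (z ^ 2) hz2n hz21
      have hzp1 : IsSquare (z + 1) := by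
        by_contra hc
        have := hmul (z - 1) (z + 1) hA hc
        rw [show (z - 1) * (z + 1) = z ^ 2 - 1 by ring] at this
        exact hB this
      have hzp10 : z + 1 ≠ 0 := fun h' => hzm1 (by linear_combination h')
      rcases hsq_pm (z + 1) hzp10 hzp1 with h' | h'
      · exfalso
        have hzp11 : z + 1 ≠ 1 := fun hh => hz0 (by linear_combination hh)
        refine hno (z + 1) h' hzp11 ?_
        rw [show z + 1 - 1 = z by ring]
        exact hsqN z hzn
      · constructor
        · have he : (-(1 + z)) ^ n = -((1 + z) ^ n) := Odd.neg_pow hoddn _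
          rw [he, show (1 : F) + z = z + 1 by ring, h', neg_neg]
        · intro hh
          have hz2' : z = -2 := by linear_combination -hh
          have hsq' : IsSquare ((-1 : F) * z) := hsqneg.mul (hsqN z hzn)
          rw [hz2', show (-1 : F) * (-2) = 2 by norm_num] at hsq'
          exact hns2 hsq'
    -- sums of distinct elements of N land in -N
    have hsum : ∀ u v : F, u ^ n = 1 → v ^ n = 1 → u ≠ v → (-(u + v)) ^ n = 1 := by
      intro u v hu hv huv
      have hu0 := hx0 u hu
      have hw : (v * u⁻¹) ^ n = 1 := by
        rw [mul_pow, hv, inv_pow, hu, inv_one, one_mul]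
      have hw1 : v * u⁻¹ ≠ 1 := by
        intro h'
        apply huv
        field_simp at h'
        exact h'.symm
      obtain ⟨hI, -⟩ := lemI _ hw hw1
      have key : -(u + v) = u * (-(1 + v * u⁻¹)) := by
        field_simp
      rw [key, mul_pow, hu, one_mul]
      exact hI
    -- the contradiction
    obtain ⟨ha_n, -⟩ := lemI _ hx₀n hx₀1
    obtain ⟨hb_n, -⟩ := lemI ((((g : Fˣ) : F) ^ 4) ^ 2)
      (by rw [pow_right_comm, hx₀n, one_pow]) hx₀2
    have ha2n : ((-(1 + ((g : Fˣ) : F) ^ 4)) ^ 2) ^ n = 1 := by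
      rw [pow_right_comm, ha_n, one_pow]
    have hab : (-(1 + ((g : Fˣ) : F) ^ 4)) ^ 2 ≠ -(1 + (((g : Fˣ) : F) ^ 4) ^ 2) := by
      intro h'
      have h4' : (2 : F) * ((((g : Fˣ) : F) ^ 4) ^ 2 + ((g : Fˣ) : F) ^ 4 + 1) = 0 := by
        linear_combination h'
      have h3 : (((g : Fˣ) : F) ^ 4) ^ 2 + ((g : Fˣ) : F) ^ 4 + 1 = 0 := by
        rcases mul_eq_zero.mp h4' with h5' | h5'
        · exact absurd h5' h2
        · exact h5'
      exact hx₀3 (by linear_combination (((g : Fˣ) : F) ^ 4 - 1) * h3)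
    have hfin := hsum _ _ ha2n hb_n hab
    rw [show -((-(1 + ((g : Fˣ) : F) ^ 4)) ^ 2 + -(1 + (((g : Fˣ) : F) ^ 4) ^ 2))
      = -(2 * ((g : Fˣ) : F) ^ 4) by ring] at hfin
    have hsq2x : IsSquare (-(2 * ((g : Fˣ) : F) ^ 4)) := hsqN _ hfin
    obtain ⟨s, hs⟩ := hsq2x
    obtain ⟨r, hrx⟩ := hsqN _ hx₀n
    have hx₀0 : ((g : Fˣ) : F) ^ 4 ≠ 0 := hx0 _ hx₀n
    have hr0 : r ≠ 0 := by
      rintro rfl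
      exact hx₀0 (by rw [hrx, mul_zero])
    have hsq2 : IsSquare (2 : F) := by
      refine ⟨s * i / r, ?_⟩
      rw [div_mul_div_comm]
      rw [eq_div_iff (mul_ne_zero hr0 hr0)]
      linear_combination (i ^ 2) * hs + (2 * ((g : Fˣ) : F) ^ 4) * hi2 + (-2) * hrx
    exact hns2 hsq2
  obtain ⟨z, hzn, hz1, hzsq⟩ := hexz
  -- construct w with w⁴ = z
  have hz0 : z ≠ 0 := hx0 z hzn
  have hsn : (z ^ (n / 2 + 1)) ^ n = 1 := by
    rw [pow_right_comm, hzn, one_pow]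
  have hw2 : ((z ^ (n / 2 + 1)) ^ (n / 2 + 1)) ^ 2 = z ^ (n / 2 + 1) :=
    hsqrtN _ hsn
  have hw4z : ((z ^ (n / 2 + 1)) ^ (n / 2 + 1)) ^ 4 = z := by
    rw [show (4 : ℕ) = 2 * 2 by rfl, pow_mul, hw2]
    exact hsqrtN z hzn
  have hw0 : (z ^ (n / 2 + 1)) ^ (n / 2 + 1) ≠ 0 :=
    pow_ne_zero _ (pow_ne_zero _ hz0)
  have hw4ne : ((z ^ (n / 2 + 1)) ^ (n / 2 + 1)) ^ 4 ≠ 1 := by rw [hw4z]; exact hz1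
  have hw4sq : IsSquare (((z ^ (n / 2 + 1)) ^ (n / 2 + 1)) ^ 4 - 1) := by
    rw [hw4z]; exact hzsq
  -- build the infinite chain
  have main : ∀ (m : ℕ) (w : F), w ≠ 0 → w ^ 4 ≠ 1 → IsSquare (w ^ 4 - 1) →
      TAdvN m (kk w) := by
    intro m
    induction m with
    | zero => intro w h1 h4 hsq; exact tk_kk h2 h1 h4
    | succ m ih =>
      intro w h1 h4 hsq
      obtain ⟨v, ⟨hv1, hv4, hvsq⟩, hadv⟩ := step_lemma h2 i hi2 hnsi hmul h1 h4 hsq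
      exact ⟨kk v, hadv, ih v hv1 hv4 hvsq⟩
  refine ⟨((1 : F), kk ((z ^ (n / 2 + 1)) ^ (n / 2 + 1))), ?_⟩
  intro m
  have := tadvN_imp_advN h2 m 1 (kk ((z ^ (n / 2 + 1)) ^ (n / 2 + 1))) one_ne_zero
    (main m _ hw0 hw4ne hw4sq)
  rwa [one_mul] at this

end AGMStmt10

theorem stmt10 {F : Type*} [Field F] [Fintype F] (q : ℕ)
    (hq : Fintype.card F = q) (h5 : q % 8 = 5) :
    {p : F × F | AGM.AdvInf p} = ∅ ↔ (q = 5 ∨ q = 13) := by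
  constructor
  · intro hempty
    by_contra hq'
    push_neg at hq'
    obtain ⟨p, hp⟩ := AGMStmt10.exists_advInf q hq h5 hq'.1 hq'.2
    have hmem : p ∈ {p : F × F | AGM.AdvInf p} := hp
    rw [hempty] at hmem
    exact hmem
  · intro hc
    rw [Set.eq_empty_iff_forall_notMem]
    intro p hp
    rcases hc with h | h
    · exact AGMStmt10.not_advInf_card_five (by rw [hq, h]) p hp
    · exact AGMStmt10.not_advInf_card_13 (by rw [hq, h]) p hp
end

section
/- Let K be a field of characteristic ≠ 2 and let (a,b) be a nontrivial node. Then (a,b) is 1-times backtrackable (i.e., there exists a nontrivial node advancing to (a,b)) if and only if a² − b² is a square in K. Moreover, if (x,y) and (x',y') are nontrivial nodes with (x,y) ↦ (a,b) and (x',y') ↦ (a,b), then (x',y') = (x,y) or (x',y') = (y,x); that is, a once-backtrackable nontrivial node has exactly two parents, which are each other's reversals. -/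
/-! The parents `(x, y)` of `(a, b)` are the ordered pairs of roots of `T² - 2aT + b²`,
since `x + y = 2a` and `xy = b²`. These roots are `a ± s` with `s² = a² - b²`. -/

theorem Prod.eq_or_eq_swap_of_add_eq_of_mul_eq {R : Type*} [CommRing R] [IsDomain R]
    {x y x' y' : R} (hadd : x' + y' = x + y) (hmul : x' * y' = x * y) :
    (x', y') = (x, y) ∨ (x', y') = (y, x) := by
  have hroot : (x' - x) * (x' - y) = 0 := by
    linear_combination x' * hadd - hmul
  rcases mul_eq_zero.mp hroot with hx | hy
  · exact Or.inl (Prod.ext (sub_eq_zero.mp hx) (by linear_combination hadd - hx))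
  · exact Or.inr (Prod.ext (sub_eq_zero.mp hy) (by linear_combination hadd - hy))

namespace AGM

variable {K : Type*} [Field K]

theorem Adv.four_mul_sq_sub_sq {x y a b : K} (h : Adv (x, y) (a, b)) :
    4 * (a ^ 2 - b ^ 2) = (x - y) ^ 2 := by
  obtain ⟨-, -, hmean, hgeom⟩ := h
  linear_combination (2 * a + x + y) * hmean - 4 * hgeom

theorem Adv.add_eq {x y x' y' a b : K} (h : Adv (x, y) (a, b)) (h' : Adv (x', y') (a, b)) :
    x' + y' = x + y :=
  h'.2.2.1.symm.trans h.2.2.1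

theorem Adv.mul_eq {x y x' y' a b : K} (h : Adv (x, y) (a, b)) (h' : Adv (x', y') (a, b)) :
    x' * y' = x * y :=
  h'.2.2.2.symm.trans h.2.2.2

theorem adv_add_sub_of_sq_sub_sq_eq (hchar : (2 : K) ≠ 0) {a b s : K} (hnt : Nontriv (a, b))
    (hs : a ^ 2 - b ^ 2 = s ^ 2) : Adv (a + s, a - s) (a, b) := by
  obtain ⟨ha, hb, hadd, hsub⟩ := hnt
  have hprod : (a + s) * (a - s) = b ^ 2 := by linear_combination hs
  have hs0 : s ≠ 0 := by
    rintro rfl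
    exact mul_ne_zero hadd hsub (by linear_combination hs)
  have hparent : (a + s) * (a - s) ≠ 0 := hprod ▸ pow_ne_zero 2 hb
  refine ⟨⟨left_ne_zero_of_mul hparent, right_ne_zero_of_mul hparent, ?_, ?_⟩,
    ⟨ha, hb, hadd, hsub⟩, by ring, hprod.symm⟩
  · rw [add_add_sub_cancel, ← two_mul]
    exact mul_ne_zero hchar ha
  · rw [add_sub_sub_cancel, ← two_mul]
    exact mul_ne_zero hchar hs0

end AGM

theorem stmt11 {K : Type*} [Field K] (hchar : (2 : K) ≠ 0)
    (a b : K) (hnt : AGM.Nontriv (a, b)) :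
    ((∃ p : K × K, AGM.Adv p (a, b)) ↔ ∃ s : K, a ^ 2 - b ^ 2 = s ^ 2) ∧
    (∀ x y x' y' : K, AGM.Adv (x, y) (a, b) → AGM.Adv (x', y') (a, b) →
      (x', y') = (x, y) ∨ (x', y') = (y, x)) := by
  refine ⟨⟨?_, fun ⟨s, hs⟩ => ⟨_, AGM.adv_add_sub_of_sq_sub_sq_eq hchar hnt hs⟩⟩, ?_⟩
  · rintro ⟨⟨x, y⟩, h⟩
    refine ⟨(x - y) / 2, ?_⟩
    rw [div_pow, eq_div_iff (pow_ne_zero 2 hchar), ← h.four_mul_sq_sub_sq]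
    ring
  · intro x y x' y' h h'
    exact Prod.eq_or_eq_swap_of_add_eq_of_mul_eq (h.add_eq h') (h.mul_eq h')
end

section
/- Let K be a field of characteristic ≠ 2 in which −1 is a square, and let (a,b) be a nontrivial node. Then (a,b) is 2-times backtrackable (i.e., there exist nontrivial nodes (p,r) and (u,v) with (u,v) ↦ (p,r) ↦ (a,b)) if and only if a²·(a² − b²) is a fourth power in K. -/
/-! The nodes advancing to a nontrivial node `(a, b)` are exactly the `(a + s, a - s)` with
`s² = a² - b²`. Backtracking twice from `(a, b)` therefore amounts to such an `s` for which
`(a + s)² - (a - s)² = 4as` is again a square, i.e. `as = w²`. Then `a²(a² - b²) = (as)² = w⁴`;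
conversely, from `a²(a² - b²) = t⁴` take `s = t² / a`. -/

namespace AGM

variable {K : Type*} [Field K] {a b p r s : K}

theorem nontriv_add_sub (h2 : (2 : K) ≠ 0) (hab : Nontriv (a, b)) (hs : s ^ 2 = a ^ 2 - b ^ 2) :
    Nontriv (a + s, a - s) := by
  obtain ⟨ha, hb, hadd, hsub⟩ := hab
  have hprod : (a + s) * (a - s) ≠ 0 := by
    rw [show (a + s) * (a - s) = b ^ 2 by linear_combination -hs]
    exact pow_ne_zero 2 hb
  have hs0 : s ≠ 0 := by
    rintro rfl
    exact mul_ne_zero hadd hsub (by linear_combination -hs)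
  refine ⟨left_ne_zero_of_mul hprod, right_ne_zero_of_mul hprod, ?_, ?_⟩
  · rw [show a + s + (a - s) = 2 * a by ring]
    exact mul_ne_zero h2 ha
  · rw [show a + s - (a - s) = 2 * s by ring]
    exact mul_ne_zero h2 hs0

theorem adv_iff_exists (h2 : (2 : K) ≠ 0) (hab : Nontriv (a, b)) :
    Adv (p, r) (a, b) ↔ ∃ s, s ^ 2 = a ^ 2 - b ^ 2 ∧ p = a + s ∧ r = a - s := by
  constructor
  · rintro ⟨-, -, hsum, hprod⟩
    dsimp only at hsum hprod
    exact ⟨p - a, by linear_combination hprod - p * hsum, by ring, by linear_combination -hsum⟩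
  · rintro ⟨s, hs, rfl, rfl⟩
    exact ⟨nontriv_add_sub h2 hab hs, hab, by ring, by linear_combination hs⟩

theorem backN_succ_iff (h2 : (2 : K) ≠ 0) (hab : Nontriv (a, b)) (n : ℕ) :
    BackN (n + 1) (a, b) ↔ ∃ s, s ^ 2 = a ^ 2 - b ^ 2 ∧ BackN n (a + s, a - s) := by
  constructor
  · rintro ⟨⟨p, r⟩, hadv, hback⟩
    obtain ⟨s, hs, rfl, rfl⟩ := (adv_iff_exists h2 hab).1 hadv
    exact ⟨s, hs, hback⟩
  · rintro ⟨s, hs, hback⟩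
    exact ⟨_, (adv_iff_exists h2 hab).2 ⟨s, hs, rfl, rfl⟩, hback⟩

theorem backN_one_iff (h2 : (2 : K) ≠ 0) (hab : Nontriv (a, b)) :
    BackN 1 (a, b) ↔ ∃ s, s ^ 2 = a ^ 2 - b ^ 2 := by
  rw [backN_succ_iff h2 hab]
  exact exists_congr fun s => and_iff_left_of_imp (nontriv_add_sub h2 hab)

theorem backN_two_iff (h2 : (2 : K) ≠ 0) (hab : Nontriv (a, b)) :
    BackN 2 (a, b) ↔ ∃ s, s ^ 2 = a ^ 2 - b ^ 2 ∧ ∃ w, w ^ 2 = a * s := by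
  rw [backN_succ_iff h2 hab]
  refine exists_congr fun s => and_congr_right fun hs => ?_
  rw [backN_one_iff h2 (nontriv_add_sub h2 hab hs)]
  constructor
  · rintro ⟨w, hw⟩
    exact ⟨w / 2, by field_simp; linear_combination hw⟩
  · rintro ⟨w, hw⟩
    exact ⟨2 * w, by linear_combination 4 * hw⟩

theorem exists_sq_eq_and_sq_eq_mul_iff {c : K} (ha : a ≠ 0) :
    (∃ s, s ^ 2 = c ∧ ∃ w, w ^ 2 = a * s) ↔ ∃ t, a ^ 2 * c = t ^ 4 := by
  constructor
  · rintro ⟨s, rfl, w, hw⟩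
    exact ⟨w, by linear_combination -(w ^ 2 + a * s) * hw⟩
  · rintro ⟨t, ht⟩
    refine ⟨t ^ 2 / a, ?_, t, ?_⟩
    · field_simp
      linear_combination -ht
    · field_simp

end AGM

theorem stmt12_general {K : Type*} [Field K] (hchar : (2 : K) ≠ 0)
    (a b : K) (hnt : AGM.Nontriv (a, b)) :
    AGM.BackN 2 (a, b) ↔ ∃ t : K, a ^ 2 * (a ^ 2 - b ^ 2) = t ^ 4 := by
  rw [AGM.backN_two_iff hchar hnt, AGM.exists_sq_eq_and_sq_eq_mul_iff hnt.1]

theorem stmt12 {K : Type*} [Field K] (hchar : (2 : K) ≠ 0)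
    (hsq : IsSquare (-1 : K)) (a b : K) (hnt : AGM.Nontriv (a, b)) :
    AGM.BackN 2 (a, b) ↔ ∃ t : K, a ^ 2 * (a ^ 2 - b ^ 2) = t ^ 4 :=
  stmt12_general hchar a b hnt
end

section
/- Let F be a finite field with q elements where q ≡ 5 (mod 8). Then S_F^{back_∞} = S_F^{back_2} = { (a,b) ∈ F² : (a,b) is a nontrivial node and a²·(a² − b²) is a fourth power in F }. -/
namespace AGMProof

open AGM

variable {F : Type*} [Field F]

/-- The "good" predicate: nontrivial and a²(a²-b²) a fourth power. -/
def Good (p : F × F) : Prop :=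
  Nontriv p ∧ ∃ t : F, p.1 ^ 2 * (p.1 ^ 2 - p.2 ^ 2) = t ^ 4

lemma nontriv_pred {c d s : F} (htwo : (2:F) ≠ 0) (hn : Nontriv ((c, d) : F × F))
    (hs : s ^ 2 = c ^ 2 - d ^ 2) :
    Nontriv ((c + s, c - s) : F × F) ∧ Adv (c + s, c - s) (c, d) := by
  obtain ⟨hc, hd, hcd1, hcd2⟩ := hn
  simp only [ne_eq] at hc hd hcd1 hcd2
  have hprod : (c + s) * (c - s) = d ^ 2 := by linear_combination -hs
  have hd2 : d ^ 2 ≠ 0 := pow_ne_zero 2 hd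
  have ha : c + s ≠ 0 := fun h => hd2 (by rw [← hprod, h, zero_mul])
  have hb : c - s ≠ 0 := fun h => hd2 (by rw [← hprod, h, mul_zero])
  have hs0 : s ≠ 0 := by
    intro h
    rw [h] at hs
    have h0 : (c + d) * (c - d) = 0 := by linear_combination -hs
    rcases mul_eq_zero.mp h0 with h' | h'
    · exact hcd1 h'
    · exact hcd2 h'
  have hnt : Nontriv ((c + s, c - s) : F × F) := by
    refine ⟨ha, hb, ?_, ?_⟩
    · show c + s + (c - s) ≠ 0
      intro h
      exact hc (by apply mul_left_cancel₀ htwo; linear_combination h)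
    · show c + s - (c - s) ≠ 0
      intro h
      exact hs0 (by apply mul_left_cancel₀ htwo; linear_combination h)
  refine ⟨hnt, hnt, ⟨hc, hd, hcd1, hcd2⟩, ?_, ?_⟩
  · show 2 * c = c + s + (c - s); ring
  · show d ^ 2 = (c + s) * (c - s); linear_combination -hprod

/-- forward: two backtracks give the fourth-power condition -/
lemma back2_to_good (htwo : (2:F) ≠ 0) {p : F × F} (h : BackN 2 p) : Good p := by
  obtain ⟨r, hadv, r', hadv', hnt'⟩ := h
  obtain ⟨hnr, hnp, h1, h2⟩ := hadv
  obtain ⟨hnr', _, h3, h4⟩ := hadv'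
  refine ⟨hnp, (r'.1 - r'.2) / 4, ?_⟩
  have h4ne : (4:F) ≠ 0 := by
    intro h; apply htwo
    rcases mul_eq_zero.mp (show (2:F)*2 = 0 by rw [show (2:F)*2 = 4 by norm_num, h])
      with h' | h' <;> exact h'
  have e1 : 4 * (p.1^2 - p.2^2) = (r.1 - r.2)^2 := by
    linear_combination (2*p.1 + r.1 + r.2) * h1 - 4*h2
  have e2 : 4 * (r.1^2 - r.2^2) = (r'.1 - r'.2)^2 := by
    linear_combination (2*r.1 + r'.1 + r'.2) * h3 - 4*h4
  rw [div_pow, eq_div_iff (pow_ne_zero 4 h4ne)]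
  linear_combination ((r'.1-r'.2)^2 + 4*(r.1^2-r.2^2)) * e2 +
      16*(r.1-r.2)^2*(2*p.1+r.1+r.2) * h1 + 64*p.1^2 * e1


/-- product of two nonsquares is a square in a finite field -/
lemma mul_nonsq [Fintype F] {x y : F} (hx : ¬ IsSquare x) (hy : ¬ IsSquare y) :
    IsSquare (x * y) := by
  classical
  have hx0 : x ≠ 0 := fun h => hx (h ▸ IsSquare.zero)
  have hy0 : y ≠ 0 := fun h => hy (h ▸ IsSquare.zero)
  have h1 : quadraticChar F x = -1 := quadraticChar_neg_one_iff_not_isSquare.mpr hx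
  have h2 : quadraticChar F y = -1 := quadraticChar_neg_one_iff_not_isSquare.mpr hy
  have h3 : quadraticChar F (x * y) = 1 := by rw [map_mul, h1, h2]; ring
  exact (quadraticChar_one_iff_isSquare (mul_ne_zero hx0 hy0)).mp h3

/-- every good node has a good predecessor -/
lemma good_pred [Fintype F] (hi : ∃ i : F, i ^ 2 = -1) (h2ns : ¬ IsSquare (2:F))
    (htwo : (2:F) ≠ 0) {p : F × F} (hg : Good p) :
    ∃ q, Adv q p ∧ Good q := by
  obtain ⟨c, d⟩ := p
  obtain ⟨hn, t, ht⟩ := hg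
  simp only at ht
  obtain ⟨hc, hd, hcd1, hcd2⟩ := hn
  simp only [ne_eq] at hc hd hcd1 hcd2
  have hn' : Nontriv ((c, d) : F × F) := ⟨hc, hd, hcd1, hcd2⟩
  have ht0 : t ≠ 0 := by
    intro h
    rw [h] at ht
    have : c ^ 2 * ((c + d) * (c - d)) = 0 := by linear_combination ht
    rcases mul_eq_zero.mp this with h' | h'
    · exact hc (pow_eq_zero_iff (by norm_num) |>.mp h')
    · rcases mul_eq_zero.mp h' with h'' | h''
      · exact hcd1 h''
      · exact hcd2 h''
  obtain ⟨s, hcs⟩ : ∃ s : F, c * s = t ^ 2 := ⟨t ^ 2 / c, by field_simp⟩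
  have hs2 : s ^ 2 = c ^ 2 - d ^ 2 := by
    apply mul_left_cancel₀ (pow_ne_zero 2 hc)
    linear_combination (c * s + t ^ 2) * hcs - ht
  have hs2' : (-s) ^ 2 = c ^ 2 - d ^ 2 := by linear_combination hs2
  obtain ⟨hntP, hadvP⟩ := nontriv_pred htwo hn' hs2
  obtain ⟨hntM, hadvM⟩ := nontriv_pred htwo hn' hs2'
  have hprod : (c + s) * (c - s) = d ^ 2 := by linear_combination -hs2
  by_cases hsq : IsSquare (t * (c + s))
  · -- use predecessor (c - s, c + s)
    refine ⟨(c + -s, c - -s), hadvM, hntM, ?_⟩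
    obtain ⟨v, hv⟩ := hsq
    have hv0 : v ≠ 0 := by
      intro h
      rw [h, mul_zero] at hv
      rcases mul_eq_zero.mp hv with h' | h'
      · exact ht0 h'
      · exact hntP.1 h'
    obtain ⟨i, hii⟩ := hi
    have hv2 : v ^ 2 = t * (c + s) := by rw [sq, ← hv]
    obtain ⟨w, hw⟩ : ∃ w : F, w ^ 2 = t * (c - s) := by
      refine ⟨d * t / v, ?_⟩
      rw [div_pow, div_eq_iff (pow_ne_zero 2 hv0)]
      linear_combination -(t * (c - s)) * hv2 - t ^ 2 * hprod
    have hI : (1 + i) ^ 4 = -4 := by linear_combination (i ^ 2 + 4 * i + 5) * hii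
    refine ⟨(1 + i) * w, ?_⟩
    simp only
    linear_combination (-(w ^ 4)) * hI + 4 * (w ^ 2 + t * (c - s)) * hw - 4 * (c - s) ^ 2 * hcs
  · -- use predecessor (c + s, c - s)
    refine ⟨(c + s, c - s), hadvP, hntP, ?_⟩
    obtain ⟨v, hv⟩ := mul_nonsq h2ns hsq
    refine ⟨v, ?_⟩
    simp only
    have hv2 : 2 * (t * (c + s)) = v ^ 2 := by rw [sq]; exact hv
    linear_combination (2 * t * (c + s) + v ^ 2) * hv2 + 4 * (c + s) ^ 2 * hcs

/-- good nodes are n-times backtrackable for every n -/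
lemma good_backN [Fintype F] (hi : ∃ i : F, i ^ 2 = -1) (h2ns : ¬ IsSquare (2:F))
    (htwo : (2:F) ≠ 0) : ∀ n (p : F × F), Good p → BackN n p := by
  intro n
  induction n with
  | zero => exact fun p hp => hp.1
  | succ n ih =>
    intro p hp
    obtain ⟨q, hadv, hq⟩ := good_pred hi h2ns htwo hp
    exact ⟨q, hadv, ih q hq⟩

end AGMProof

theorem stmt14 {F : Type*} [Field F] [Fintype F] (q : ℕ)
    (hq : Fintype.card F = q) (h5 : q % 8 = 5) :
    {p : F × F | AGM.BackInf p} = {p : F × F | AGM.BackN 2 p} ∧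
    {p : F × F | AGM.BackN 2 p} =
      {p : F × F | AGM.Nontriv p ∧
        ∃ t : F, p.1 ^ 2 * (p.1 ^ 2 - p.2 ^ 2) = t ^ 4} := by
  have htwo : (2:F) ≠ 0 := by
    have h : ringChar F ≠ 2 := by
      intro hc
      have he := FiniteField.even_card_of_char_two (F := F) hc
      rw [hq] at he
      omega
    exact Ring.two_ne_zero h
  have hi : ∃ i : F, i ^ 2 = -1 := by
    have h : IsSquare (-1 : F) := FiniteField.isSquare_neg_one_iff.mpr (by rw [hq]; omega)
    obtain ⟨r, hr⟩ := h
    exact ⟨r, by rw [sq]; exact hr.symm⟩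
  have h2ns : ¬ IsSquare (2 : F) := by
    intro h
    have h' := (FiniteField.isSquare_two_iff).mp h
    rw [hq] at h'
    omega
  constructor
  · ext p
    simp only [Set.mem_setOf_eq]
    exact ⟨fun h => h 2,
      fun h n => AGMProof.good_backN hi h2ns htwo n p (AGMProof.back2_to_good htwo h)⟩
  · ext p
    simp only [Set.mem_setOf_eq]
    exact ⟨fun h => AGMProof.back2_to_good htwo h,
      fun h => AGMProof.good_backN hi h2ns htwo 2 p h⟩
end
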